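/- arXiv:1010.3465 — 8 statements merged into one kernel-verified Lean document; each statement's English description precedes it below -/
import Mathlib

section
/- Let V be a finite-dimensional real vector space, let S be the space of quadratic forms on V, let L be a linear subspace of S, and let K = {Q ∈ L : Q is positive semidefinite}. Suppose a quadratic form Q spans an extreme ray of K. Then the kernel of Q is maximal among forms in L: if P ∈ L and ker Q ⊆ ker P, then P = λQ for some λ ∈ ℝ. -/
/-!
If `ker Q ⊆ ker P`, both forms descend to `V ⧸ ker Q`, where `Q` becomes positive definite; by
compactness of the unit sphere (after choosing a norm), `|P| ≤ C Q` for some `C > 0`. Then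
`Q ± C⁻¹ P` are positive semidefinite forms in `L` whose halves sum to `Q`, so extremality makes
`Q + C⁻¹ P` a multiple of `Q`.
-/

open Metric QuadraticMap

namespace QuadraticMap

theorem continuous_of_finiteDimensional {𝕜 E : Type*} [NontriviallyNormedField 𝕜]
    [CompleteSpace 𝕜] [NormedAddCommGroup E] [NormedSpace 𝕜 E] [FiniteDimensional 𝕜 E]
    (Q : QuadraticForm 𝕜 E) : Continuous Q := by
  let B := (Q.toBilin (Module.finBasis 𝕜 E)).toContinuousBilinearMap
  have hB : Continuous fun x => B x x := B.continuous.clm_apply continuous_id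
  convert hB using 1
  ext x
  exact (congrArg (· x) (Q.toQuadraticMap_toBilin (Module.finBasis 𝕜 E))).symm

theorem PosDef.exists_abs_le_mul_of_normedSpace {E : Type*} [NormedAddCommGroup E]
    [NormedSpace ℝ E] [FiniteDimensional ℝ E] {Q : QuadraticForm ℝ E} (hQ : Q.PosDef)
    (P : QuadraticForm ℝ E) :
    ∃ C, 0 < C ∧ ∀ x, |P x| ≤ C * Q x := by
  have hQ_sphere : ∀ u ∈ sphere (0 : E) 1, 0 < Q u := fun u hu =>
    hQ u (ne_zero_of_mem_unit_sphere ⟨u, hu⟩)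
  obtain ⟨M, hM⟩ := (isCompact_sphere (0 : E) 1).exists_bound_of_continuousOn
    (f := fun x => |P x| / Q x)
    ((continuous_of_finiteDimensional P).abs.continuousOn.div
      (continuous_of_finiteDimensional Q).continuousOn fun u hu => (hQ_sphere u hu).ne')
  refine ⟨max M 1, by positivity, fun x => ?_⟩
  rcases eq_or_ne x 0 with rfl | hx
  · simp
  obtain ⟨u, hu, hxu⟩ : ∃ u ∈ sphere (0 : E) 1, x = ‖x‖ • u :=
    ⟨‖x‖⁻¹ • x, by simp [norm_smul, hx], by simp [smul_smul, hx]⟩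
  have hPu : |P u| ≤ max M 1 * Q u := by
    have := hM u hu
    rw [Real.norm_eq_abs, abs_div, abs_abs, abs_of_pos (hQ_sphere u hu),
      div_le_iff₀ (hQ_sphere u hu)] at this
    exact this.trans (by gcongr; exacts [(hQ_sphere u hu).le, le_max_left _ _])
  rw [hxu, QuadraticMap.map_smul, QuadraticMap.map_smul, smul_eq_mul, smul_eq_mul, abs_mul,
    abs_of_nonneg (by positivity), mul_left_comm]
  gcongr

variable {V : Type*} [AddCommGroup V] [Module ℝ V]

theorem mem_radical_iff_forall_half_polar_eq_zero {Q : QuadraticForm ℝ V} {v : V} :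
    v ∈ Q.radical ↔ ∀ w, (Q (v + w) - Q v - Q w) / 2 = 0 := by
  simp [radical_eq_ker_polarBilin, LinearMap.ext_iff, polar]

theorem mem_radical_of_nonneg_of_apply_eq_zero {Q : QuadraticForm ℝ V} (hQ : ∀ v, 0 ≤ Q v)
    {v : V} (hv : Q v = 0) : v ∈ Q.radical := by
  rw [radical_eq_ker_polarBilin]
  refine (LinearMap.BilinForm.apply_apply_same_eq_zero_iff (polarBilin Q) (fun x => ?_) ?_).1 ?_
  · simpa [polar_self] using hQ x
  · exact ⟨fun x y => polar_comm Q x y⟩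
  · simp [polar_self, hv]

theorem PosDef.exists_abs_le_mul [FiniteDimensional ℝ V] {Q : QuadraticForm ℝ V} (hQ : Q.PosDef)
    (P : QuadraticForm ℝ V) : ∃ C, 0 < C ∧ ∀ v, |P v| ≤ C * Q v := by
  let e := (Module.finBasis ℝ V).equivFun
  have hQe : (Q.comp e.symm.toLinearMap).PosDef := fun x hx => hQ _ (by simpa using hx)
  obtain ⟨C, hC, hPC⟩ := hQe.exists_abs_le_mul_of_normedSpace (P.comp e.symm.toLinearMap)
  exact ⟨C, hC, fun v => by simpa using hPC (e v)⟩

theorem exists_abs_le_mul_of_radical_le [FiniteDimensional ℝ V] {Q P : QuadraticForm ℝ V}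
    (hQ : ∀ v, 0 ≤ Q v) (hQP : Q.radical ≤ P.radical) : ∃ C, 0 < C ∧ ∀ v, |P v| ≤ C * Q v := by
  have hQ_posDef : (Q.lift Q.radical le_rfl).PosDef := by
    intro x hx
    induction x using Submodule.Quotient.induction_on with | H v => ?_
    refine (hQ v).lt_of_ne fun h => hx ?_
    exact (Submodule.Quotient.mk_eq_zero _).2 (mem_radical_of_nonneg_of_apply_eq_zero hQ h.symm)
  obtain ⟨C, hC, hPC⟩ := hQ_posDef.exists_abs_le_mul (P.lift Q.radical hQP)
  exact ⟨C, hC, fun v => hPC (Submodule.Quotient.mk v)⟩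

theorem exists_eq_smul_of_abs_le_mul {L : Submodule ℝ (QuadraticForm ℝ V)}
    {Q P : QuadraticForm ℝ V} (hQL : Q ∈ L)
    (hQext : ∀ Q₁ Q₂ : QuadraticForm ℝ V, Q₁ ∈ L → Q₂ ∈ L →
      (∀ v : V, 0 ≤ Q₁ v) → (∀ v : V, 0 ≤ Q₂ v) → Q = Q₁ + Q₂ →
      (∃ c : ℝ, 0 ≤ c ∧ Q₁ = c • Q) ∧ (∃ c : ℝ, 0 ≤ c ∧ Q₂ = c • Q))
    (hPL : P ∈ L) {C : ℝ} (hC : 0 < C) (hPC : ∀ v, |P v| ≤ C * Q v) :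
    ∃ lam : ℝ, P = lam • Q := by
  obtain ⟨⟨c, -, hc⟩, -⟩ := hQext ((2 * C)⁻¹ • (C • Q + P)) ((2 * C)⁻¹ • (C • Q - P))
    (L.smul_mem _ (L.add_mem (L.smul_mem _ hQL) hPL))
    (L.smul_mem _ (L.sub_mem (L.smul_mem _ hQL) hPL))
    (fun v => by
      simp only [smul_apply, add_apply, smul_eq_mul]
      exact mul_nonneg (by positivity) (by linarith [neg_abs_le (P v), hPC v]))
    (fun v => by
      simp only [smul_apply, sub_apply, smul_eq_mul]
      exact mul_nonneg (by positivity) (by linarith [le_abs_self (P v), hPC v]))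
    (by ext v; simp only [smul_apply, add_apply, sub_apply, smul_eq_mul]; field_simp; ring)
  refine ⟨2 * C * c - C, ?_⟩
  ext v
  have hcv := congr($hc v)
  simp only [smul_apply, add_apply, smul_eq_mul] at hcv ⊢
  field_simp at hcv
  linarith

end QuadraticMap

theorem stmt_6_general
    (V : Type*) [AddCommGroup V] [Module ℝ V] [FiniteDimensional ℝ V]
    (L : Submodule ℝ (QuadraticForm ℝ V))
    (Q : QuadraticForm ℝ V)
    (hQL : Q ∈ L)
    (hQpsd : ∀ v : V, 0 ≤ Q v)
    (hQext : ∀ Q₁ Q₂ : QuadraticForm ℝ V, Q₁ ∈ L → Q₂ ∈ L →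
      (∀ v : V, 0 ≤ Q₁ v) → (∀ v : V, 0 ≤ Q₂ v) → Q = Q₁ + Q₂ →
      (∃ c : ℝ, 0 ≤ c ∧ Q₁ = c • Q) ∧ (∃ c : ℝ, 0 ≤ c ∧ Q₂ = c • Q)) :
    ∀ P : QuadraticForm ℝ V, P ∈ L →
      {v : V | ∀ w : V, (Q (v + w) - Q v - Q w) / 2 = 0} ⊆
        {v : V | ∀ w : V, (P (v + w) - P v - P w) / 2 = 0} →
      ∃ lam : ℝ, P = lam • Q := by
  intro P hPL hker
  have hQP : Q.radical ≤ P.radical := fun v hv =>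
    mem_radical_iff_forall_half_polar_eq_zero.2 <|
      hker <| mem_radical_iff_forall_half_polar_eq_zero.1 hv
  obtain ⟨C, hC, hPC⟩ := exists_abs_le_mul_of_radical_le hQpsd hQP
  exact exists_eq_smul_of_abs_le_mul hQL hQext hPL hC hPC

theorem stmt_6
    (V : Type*) [AddCommGroup V] [Module ℝ V] [FiniteDimensional ℝ V]
    (L : Submodule ℝ (QuadraticForm ℝ V))
    (Q : QuadraticForm ℝ V)
    (hQL : Q ∈ L)
    (hQpsd : ∀ v : V, 0 ≤ Q v)
    (hQne : Q ≠ 0)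
    (hQext : ∀ Q₁ Q₂ : QuadraticForm ℝ V, Q₁ ∈ L → Q₂ ∈ L →
      (∀ v : V, 0 ≤ Q₁ v) → (∀ v : V, 0 ≤ Q₂ v) → Q = Q₁ + Q₂ →
      (∃ c : ℝ, 0 ≤ c ∧ Q₁ = c • Q) ∧ (∃ c : ℝ, 0 ≤ c ∧ Q₂ = c • Q)) :
    ∀ P : QuadraticForm ℝ V, P ∈ L →
      {v : V | ∀ w : V, (Q (v + w) - Q v - Q w) / 2 = 0} ⊆
        {v : V | ∀ w : V, (P (v + w) - P v - P w) / 2 = 0} →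
      ∃ lam : ℝ, P = lam • Q :=
  stmt_6_general V L Q hQL hQpsd hQext
end

section
/- Suppose a linear functional ℓ : H(n,2d) → ℝ spans an extreme ray of the dual cone Σ(n,2d)*. Then either rank Q_ℓ = 1 (i.e., dim W_ℓ = dim H(n,d) − 1), or the forms in the kernel W_ℓ have no common zero in ℂⁿ∖{0}: for every z ∈ ℂⁿ∖{0} there exists p ∈ W_ℓ with p(z) ≠ 0. -/
/-!
If every form of W_ℓ vanishes at some z ≠ 0, evaluation at z factors through H(n,d)/W_ℓ, on which
Q_ℓ is positive definite, so |q(z)|² ≤ C·ℓ(q²). Hence ℓ ± C⁻¹·Re(c·ev_z) stay in Σ(n,2d)* for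
|c| ≤ 1, and extremality forces ev_z = γ·ℓ on H(n,2d). Then q(z)² = γ·ℓ(q²) on H(n,d): W_ℓ is the
kernel of q ↦ q(z), and these values span only a real line in ℂ because their squares all lie on
the ray ℝ≥0·γ, so W_ℓ has codimension one.
-/

open MvPolynomial

/-- Membership in the cone Σ(n,2d): a sum of squares of degree-d forms. -/
def IsSOS (n d : ℕ) (p : MvPolynomial (Fin n) ℝ) : Prop :=
  ∃ (r : ℕ) (q : Fin r → MvPolynomial (Fin n) ℝ),
    (∀ i, (q i).IsHomogeneous d) ∧ p = ∑ i, q i ^ 2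

/-- ℓ belongs to the dual cone Σ(n,2d)*: it is nonnegative on all sums of squares. -/
def InDualSigma (n d : ℕ) (l : MvPolynomial (Fin n) ℝ →ₗ[ℝ] ℝ) : Prop :=
  ∀ p : MvPolynomial (Fin n) ℝ, IsSOS n d p → 0 ≤ l p

/-- ℓ spans an extreme ray of Σ(n,2d)* (as a linear functional on H(n,2d)):
ℓ is nonzero on H(n,2d), lies in the dual cone, and whenever ℓ = ℓ₁ + ℓ₂ on H(n,2d) with
ℓ₁, ℓ₂ in the dual cone, each ℓᵢ is a nonnegative multiple of ℓ on H(n,2d). -/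
def SpansExtremeRay (n d : ℕ) (l : MvPolynomial (Fin n) ℝ →ₗ[ℝ] ℝ) : Prop :=
  (∃ f : MvPolynomial (Fin n) ℝ, f.IsHomogeneous (2 * d) ∧ l f ≠ 0) ∧
  InDualSigma n d l ∧
  ∀ l₁ l₂ : MvPolynomial (Fin n) ℝ →ₗ[ℝ] ℝ, InDualSigma n d l₁ → InDualSigma n d l₂ →
    (∀ f : MvPolynomial (Fin n) ℝ, f.IsHomogeneous (2 * d) → l f = l₁ f + l₂ f) →
    (∃ c : ℝ, 0 ≤ c ∧ ∀ f : MvPolynomial (Fin n) ℝ, f.IsHomogeneous (2 * d) → l₁ f = c * l f) ∧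
    (∃ c : ℝ, 0 ≤ c ∧ ∀ f : MvPolynomial (Fin n) ℝ, f.IsHomogeneous (2 * d) → l₂ f = c * l f)

/-- The kernel W_ℓ of the quadratic form Q_ℓ(f) = ℓ(f²) on H(n,d). -/
def Wker (n d : ℕ) (l : MvPolynomial (Fin n) ℝ →ₗ[ℝ] ℝ) : Set (MvPolynomial (Fin n) ℝ) :=
  {p | p.IsHomogeneous d ∧ ∀ q : MvPolynomial (Fin n) ℝ, q.IsHomogeneous d → l (p * q) = 0}

theorem LinearMap.finrank_range_eq_one_of_sq_eq_mul {V : Type*} [AddCommGroup V] [Module ℝ V]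
    {e : V →ₗ[ℝ] ℂ} (he : e ≠ 0)
    {γ : ℂ} (hγ : γ ≠ 0) {b : V → ℝ} (hb : ∀ x, 0 ≤ b x) (h : ∀ x, e x ^ 2 = γ * b x) :
    Module.finrank ℝ (LinearMap.range e) = 1 := by
  have hbot : LinearMap.range e ≠ ⊥ := by rwa [Ne, LinearMap.range_eq_bot]
  -- Values γ and iγ would have the squares γ² and -γ², forcing both γ and -γ into [0, ∞).
  have htop : LinearMap.range e ≠ ⊤ := by
    intro htop
    obtain ⟨x₁, hx₁⟩ := LinearMap.range_eq_top.1 htop γ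
    obtain ⟨x₂, hx₂⟩ := LinearMap.range_eq_top.1 htop (γ * Complex.I)
    have h₁ : γ = b x₁ := mul_left_cancel₀ hγ (by rw [← h x₁, hx₁, sq])
    have h₂ : -γ = b x₂ := mul_left_cancel₀ hγ (by rw [← h x₂, hx₂, mul_pow, Complex.I_sq]; ring)
    have hsum : (b x₁ + b x₂ : ℂ) = 0 := by rw [← h₁, ← h₂]; ring
    have hb₁ : b x₁ = 0 := by linarith [hb x₁, hb x₂, (by exact_mod_cast hsum : b x₁ + b x₂ = 0)]
    exact hγ (by rw [h₁, hb₁, Complex.ofReal_zero])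
  have hle : Module.finrank ℝ (LinearMap.range e) ≤ 2 :=
    Complex.finrank_real_complex ▸ Submodule.finrank_le _
  have h0 : Module.finrank ℝ (LinearMap.range e) ≠ 0 := fun h0 =>
    hbot (Submodule.finrank_eq_zero.1 h0)
  have h2 : Module.finrank ℝ (LinearMap.range e) ≠ 2 := fun h2 =>
    htop (Submodule.eq_top_of_finrank_eq (h2.trans Complex.finrank_real_complex.symm))
  omega

namespace LinearMap.BilinForm

section Field

variable {K V : Type*} [Field K] [AddCommGroup V] [Module K V] [FiniteDimensional K V]
  {B : LinearMap.BilinForm K V}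

theorem mem_range_of_ker_le (hB : LinearMap.IsSymm B) {φ : Module.Dual K V}
    (hφ : LinearMap.ker B ≤ LinearMap.ker φ) : φ ∈ LinearMap.range B := by
  have hflip : LinearMap.flip B = B := by ext x y; exact hB.eq y x
  rw [← hflip, ← dualAnnihilator_ker_eq_range_flip, Submodule.mem_dualAnnihilator]
  exact fun x hx => hφ hx

theorem exists_sq_le_mul_apply_self [LinearOrder K] [IsStrictOrderedRing K]
    (hs : ∀ x, 0 ≤ B x x) (hB : LinearMap.IsSymm B) {φ : Module.Dual K V}
    (hφ : LinearMap.ker B ≤ LinearMap.ker φ) : ∃ C, 0 ≤ C ∧ ∀ x, φ x ^ 2 ≤ C * B x x := by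
  obtain ⟨h, rfl⟩ := mem_range_of_ker_le hB hφ
  exact ⟨B h h, hs h, B.apply_sq_le_of_symm hs hB h⟩

end Field

variable {V : Type*} [AddCommGroup V] [Module ℝ V] [FiniteDimensional ℝ V]
  {B : LinearMap.BilinForm ℝ V}

theorem exists_normSq_le_mul_apply_self (hs : ∀ x, 0 ≤ B x x) (hB : LinearMap.IsSymm B)
    {e : V →ₗ[ℝ] ℂ} (he : LinearMap.ker B ≤ LinearMap.ker e) :
    ∃ C, 0 < C ∧ ∀ x, Complex.normSq (e x) ≤ C * B x x := by
  have hker (φ : ℂ →ₗ[ℝ] ℝ) : LinearMap.ker B ≤ LinearMap.ker (φ ∘ₗ e) := fun x hx => by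
    simp [LinearMap.mem_ker.1 (he hx)]
  obtain ⟨C₁, hC₁, h₁⟩ := exists_sq_le_mul_apply_self hs hB (hker Complex.reLm)
  obtain ⟨C₂, hC₂, h₂⟩ := exists_sq_le_mul_apply_self hs hB (hker Complex.imLm)
  refine ⟨C₁ + C₂ + 1, by positivity, fun x => ?_⟩
  have hre := h₁ x
  have him := h₂ x
  simp only [LinearMap.comp_apply, Complex.reLm_coe, Complex.imLm_coe] at hre him
  rw [Complex.normSq_apply]
  nlinarith [hs x]

theorem finrank_ker_eq_of_sq_eq_mul (hs : ∀ x, 0 ≤ B x x) (hB : LinearMap.IsSymm B)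
    {e : V →ₗ[ℝ] ℂ} (he : e ≠ 0) {γ : ℂ} (h : ∀ x, e x ^ 2 = γ * B x x) :
    Module.finrank ℝ (LinearMap.ker B) = Module.finrank ℝ V - 1 := by
  have hγ : γ ≠ 0 := by
    rintro rfl
    exact he (LinearMap.ext fun x => by simpa using h x)
  have hker : LinearMap.ker B = LinearMap.ker e := by
    ext x
    rw [← B.apply_apply_same_eq_zero_iff hs hB, LinearMap.mem_ker,
      ← pow_eq_zero_iff (a := e x) two_ne_zero, h x, mul_eq_zero, Complex.ofReal_eq_zero,
      or_iff_right hγ]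
  have hrank := LinearMap.finrank_range_add_finrank_ker e
  rw [LinearMap.finrank_range_eq_one_of_sq_eq_mul he hγ hs h] at hrank
  rw [hker]
  omega

end LinearMap.BilinForm

namespace MvPolynomial

variable {σ R : Type*} [CommSemiring R] {d : ℕ}

instance [Finite σ] : Module.Finite R (homogeneousSubmodule σ R d) :=
  Module.Finite.iff_fg.2 (homogeneousSubmodule_fg σ R d)

/-- The polarisation (p, q) ↦ ℓ(pq) of Q_ℓ. -/
noncomputable def momentForm (d : ℕ) (l : MvPolynomial σ R →ₗ[R] R) :
    LinearMap.BilinForm R (homogeneousSubmodule σ R d) :=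
  ((LinearMap.mul R _).compr₂ l).compl₁₂ (homogeneousSubmodule σ R d).subtype
    (homogeneousSubmodule σ R d).subtype

@[simp]
theorem momentForm_apply (l : MvPolynomial σ R →ₗ[R] R) (p q : homogeneousSubmodule σ R d) :
    momentForm d l p q = l (p * q) :=
  rfl

theorem momentForm_isSymm (l : MvPolynomial σ R →ₗ[R] R) : LinearMap.IsSymm (momentForm d l) :=
  LinearMap.isSymm_def.2 fun p q => by simp [mul_comm]

noncomputable def reMulAeval (z : σ → ℂ) (c : ℂ) : MvPolynomial σ ℝ →ₗ[ℝ] ℝ :=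
  Complex.reLm ∘ₗ LinearMap.mulLeft ℝ c ∘ₗ (aeval z).toLinearMap

@[simp]
theorem reMulAeval_apply (z : σ → ℂ) (c : ℂ) (p : MvPolynomial σ ℝ) :
    reMulAeval z c p = (c * aeval z p).re :=
  rfl

theorem exists_isHomogeneous_aeval_ne_zero {z : σ → ℂ} (hz : z ≠ 0) (d : ℕ) :
    ∃ q : MvPolynomial σ ℝ, q.IsHomogeneous d ∧ aeval z q ≠ 0 := by
  obtain ⟨j, hj⟩ := Function.ne_iff.1 hz
  exact ⟨X j ^ d, by simpa using (isHomogeneous_X ℝ j).pow d, by simpa using pow_ne_zero d hj⟩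

end MvPolynomial

section DualCone

variable {n d : ℕ} {l : MvPolynomial (Fin n) ℝ →ₗ[ℝ] ℝ}

theorem inDualSigma_iff :
    InDualSigma n d l ↔ ∀ q : MvPolynomial (Fin n) ℝ, q.IsHomogeneous d → 0 ≤ l (q * q) := by
  refine ⟨fun hl q hq => hl _ ⟨1, fun _ => q, fun _ => hq, by simp [sq]⟩, ?_⟩
  rintro hl p ⟨r, q, hq, rfl⟩
  rw [map_sum]
  exact Finset.sum_nonneg fun i _ => sq (q i) ▸ hl _ (hq i)

theorem InDualSigma.smul (hl : InDualSigma n d l) {c : ℝ} (hc : 0 ≤ c) :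
    InDualSigma n d (c • l) :=
  fun p hp => mul_nonneg hc (hl p hp)

theorem InDualSigma.momentForm_nonneg (hl : InDualSigma n d l)
    (q : homogeneousSubmodule (Fin n) ℝ d) : 0 ≤ momentForm d l q q :=
  inDualSigma_iff.1 hl q q.2

theorem inDualSigma_add_smul_reMulAeval {z : Fin n → ℂ} {C : ℝ} (hC : 0 < C)
    (hbound : ∀ q, q.IsHomogeneous d → Complex.normSq (aeval z q) ≤ C * l (q * q)) {c : ℂ}
    (hc : ‖c‖ ≤ 1) : InDualSigma n d (l + C⁻¹ • reMulAeval z c) := by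
  refine inDualSigma_iff.2 fun q hq => ?_
  have hre : -Complex.normSq (aeval z q) ≤ (c * aeval z (q * q)).re := by
    have hnorm : ‖c * aeval z (q * q)‖ ≤ Complex.normSq (aeval z q) := by
      rw [map_mul, norm_mul, norm_mul, Complex.normSq_eq_norm_sq, sq]
      exact mul_le_of_le_one_left (by positivity) hc
    linarith [(abs_le.1 (Complex.abs_re_le_norm (c * aeval z (q * q)))).1]
  have hl' : C⁻¹ * Complex.normSq (aeval z q) ≤ l (q * q) := by
    rw [inv_mul_le_iff₀ hC]
    exact hbound q hq
  simp only [LinearMap.add_apply, LinearMap.smul_apply, reMulAeval_apply, smul_eq_mul]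
  nlinarith [inv_pos.2 hC]

theorem Wker_eq_map_ker :
    Wker n d l =
      (LinearMap.ker (momentForm d l)).map (homogeneousSubmodule (Fin n) ℝ d).subtype := by
  ext p
  simp only [Wker, Set.mem_ofPred_eq, Submodule.map_coe, Set.mem_image, SetLike.mem_coe,
    LinearMap.mem_ker]
  constructor
  · rintro ⟨hp, hpq⟩
    exact ⟨⟨p, hp⟩, LinearMap.ext fun q => hpq q q.2, rfl⟩
  · rintro ⟨q, hq, rfl⟩
    exact ⟨q.2, fun r hr => LinearMap.congr_fun hq ⟨r, hr⟩⟩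

namespace SpansExtremeRay

theorem exists_eq_mul_of_add_of_sub (hl : SpansExtremeRay n d l)
    {s : MvPolynomial (Fin n) ℝ →ₗ[ℝ] ℝ} (hadd : InDualSigma n d (l + s))
    (hsub : InDualSigma n d (l - s)) :
    ∃ t : ℝ, ∀ f : MvPolynomial (Fin n) ℝ, f.IsHomogeneous (2 * d) → s f = t * l f := by
  have hsplit : ∀ f : MvPolynomial (Fin n) ℝ, f.IsHomogeneous (2 * d) →
      l f = ((1 / 2 : ℝ) • (l + s)) f + ((1 / 2 : ℝ) • (l - s)) f := fun f _ => by
    simp only [LinearMap.smul_apply, LinearMap.add_apply, LinearMap.sub_apply, smul_eq_mul]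
    ring
  obtain ⟨⟨a, -, ha⟩, -⟩ := hl.2.2 _ _ (hadd.smul (by norm_num)) (hsub.smul (by norm_num)) hsplit
  refine ⟨2 * a - 1, fun f hf => ?_⟩
  have := ha f hf
  simp only [LinearMap.smul_apply, LinearMap.add_apply, smul_eq_mul] at this
  linarith

theorem exists_aeval_eq_mul (hl : SpansExtremeRay n d l) {z : Fin n → ℂ} {C : ℝ} (hC : 0 < C)
    (hbound : ∀ q, q.IsHomogeneous d → Complex.normSq (aeval z q) ≤ C * l (q * q)) :
    ∃ γ : ℂ, ∀ f : MvPolynomial (Fin n) ℝ, f.IsHomogeneous (2 * d) → aeval z f = γ * l f := by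
  have hre (c : ℂ) (hc : ‖c‖ = 1) :
      ∃ t : ℝ, ∀ f : MvPolynomial (Fin n) ℝ, f.IsHomogeneous (2 * d) →
        (c * aeval z f).re = t * l f := by
    have hneg : l - C⁻¹ • reMulAeval z c = l + C⁻¹ • reMulAeval z (-c) := by
      refine LinearMap.ext fun f => ?_
      simp only [LinearMap.sub_apply, LinearMap.add_apply, LinearMap.smul_apply, reMulAeval_apply,
        neg_mul, Complex.neg_re, smul_eq_mul]
      ring
    have hadd := inDualSigma_add_smul_reMulAeval hC hbound hc.le
    have hsub := inDualSigma_add_smul_reMulAeval hC hbound (c := -c) (by simp [hc])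
    obtain ⟨t, ht⟩ := hl.exists_eq_mul_of_add_of_sub hadd (hneg ▸ hsub)
    refine ⟨C * t, fun f hf => ?_⟩
    have := ht f hf
    simp only [LinearMap.smul_apply, reMulAeval_apply, smul_eq_mul] at this
    field_simp at this
    linarith
  obtain ⟨t₁, ht₁⟩ := hre 1 (by simp)
  obtain ⟨t₂, ht₂⟩ := hre Complex.I (by simp)
  refine ⟨⟨t₁, -t₂⟩, fun f hf => Complex.ext ?_ ?_⟩
  · simpa using ht₁ f hf
  · have := ht₂ f hf
    rw [Complex.I_mul_re] at this
    simp only [Complex.mul_im, Complex.ofReal_re, Complex.ofReal_im, mul_zero]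
    linarith

end SpansExtremeRay

end DualCone

theorem stmt_7_general
    (n d : ℕ)
    (l : MvPolynomial (Fin n) ℝ →ₗ[ℝ] ℝ)
    (hl : SpansExtremeRay n d l) :
    Module.finrank ℝ (Submodule.span ℝ (Wker n d l)) =
      Module.finrank ℝ (homogeneousSubmodule (Fin n) ℝ d) - 1 ∨
    ∀ z : Fin n → ℂ, z ≠ 0 → ∃ p ∈ Wker n d l, aeval z p ≠ 0 := by
  refine or_iff_not_imp_right.2 fun hW => ?_
  push Not at hW
  obtain ⟨z, hz, hzW⟩ := hW
  set V := homogeneousSubmodule (Fin n) ℝ d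
  set B := momentForm d l
  let e : V →ₗ[ℝ] ℂ := (aeval z).toLinearMap ∘ₗ V.subtype
  have hB : ∀ q, 0 ≤ B q q := hl.2.1.momentForm_nonneg
  have heB : LinearMap.ker B ≤ LinearMap.ker e := fun q hq => hzW q (Wker_eq_map_ker ▸ ⟨q, hq, rfl⟩)
  obtain ⟨C, hC, hbound⟩ := LinearMap.BilinForm.exists_normSq_le_mul_apply_self hB
    (momentForm_isSymm l) heB
  obtain ⟨γ, hγ⟩ := hl.exists_aeval_eq_mul hC fun q hq => hbound ⟨q, hq⟩
  have hsq (q : V) : e q ^ 2 = γ * B q q := by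
    simpa [e, B, sq] using hγ (q * q) (two_mul d ▸ q.2.mul q.2)
  obtain ⟨q, hq, hqz⟩ := exists_isHomogeneous_aeval_ne_zero hz d
  have he : e ≠ 0 := fun h => hqz (LinearMap.congr_fun h ⟨q, hq⟩)
  rw [Wker_eq_map_ker, Submodule.span_eq, Submodule.finrank_map_subtype_eq]
  exact LinearMap.BilinForm.finrank_ker_eq_of_sq_eq_mul hB (momentForm_isSymm l) he hsq

theorem stmt_7
    (n d : ℕ) (hn : 0 < n) (hd : 0 < d)
    (l : MvPolynomial (Fin n) ℝ →ₗ[ℝ] ℝ)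
    (hl : SpansExtremeRay n d l) :
    Module.finrank ℝ (Submodule.span ℝ (Wker n d l)) =
      Module.finrank ℝ (homogeneousSubmodule (Fin n) ℝ d) - 1 ∨
    ∀ z : Fin n → ℂ, z ≠ 0 → ∃ p ∈ Wker n d l, aeval z p ≠ 0 :=
  stmt_7_general n d l hl
end

section
/- Let ℓ : H(n,2d) → ℝ be a linear functional whose associated quadratic form Q_ℓ(f) = ℓ(f²) on H(n,d) has rank 1, i.e., there exist a nonzero linear functional s : H(n,d) → ℝ and λ ∈ ℝ∖{0} with ℓ(f²) = λ·s(f)² for all f ∈ H(n,d). Then Q_ℓ corresponds to a point evaluation: there exist v ∈ ℝⁿ and c ∈ ℝ such that ℓ(f²) = c·f(v)² for all f ∈ H(n,d). -/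
open MvPolynomial

theorem stmt_8
    (n d : ℕ) (hn : 0 < n) (hd : 0 < d)
    (l s : MvPolynomial (Fin n) ℝ →ₗ[ℝ] ℝ)
    (hs_ne : ∃ f : MvPolynomial (Fin n) ℝ, f.IsHomogeneous d ∧ s f ≠ 0)
    (lam : ℝ) (hlam : lam ≠ 0)
    (hrank1 : ∀ f : MvPolynomial (Fin n) ℝ, f.IsHomogeneous d →
      l (f ^ 2) = lam * (s f) ^ 2) :
    ∃ (v : Fin n → ℝ) (c : ℝ), ∀ f : MvPolynomial (Fin n) ℝ, f.IsHomogeneous d →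
      l (f ^ 2) = c * (eval v f) ^ 2 := by
  classical
  -- degree basics
  have hdeg : ∀ α : Fin n →₀ ℕ, α.degree = ∑ i, α i := by
    intro α
    exact Finset.sum_subset (Finset.subset_univ _)
      (fun i _ h => Finsupp.notMem_support_iff.mp h)
  have hdegadd : ∀ (β : Fin n →₀ ℕ) (i : Fin n),
      (β + Finsupp.single i 1).degree = β.degree + 1 := by
    intro β i
    rw [hdeg, hdeg]
    simp only [Finsupp.add_apply, Finset.sum_add_distrib]
    congr 1
    rw [Fintype.sum_eq_single i (fun x hx => by simp [Finsupp.single_apply, (Ne.symm hx)])]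
    simp
  -- homogeneity of members of support
  have hsuppdeg : ∀ (f : MvPolynomial (Fin n) ℝ), f.IsHomogeneous d →
      ∀ α ∈ f.support, Finsupp.degree α = d := by
    intro f hf α hα
    rw [Finsupp.degree_eq_weight_one]
    exact hf (mem_support_iff.mp hα)
  -- polarization
  have hpol : ∀ f g : MvPolynomial (Fin n) ℝ, f.IsHomogeneous d → g.IsHomogeneous d →
      l (f * g) = lam * (s f * s g) := by
    intro f g hf hg
    have h1 := hrank1 (f + g) (hf.add hg)
    have e : (f + g) ^ 2 = f ^ 2 + (f * g + f * g) + g ^ 2 := by ring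
    rw [e, map_add, map_add, map_add, map_add] at h1
    have h2 := hrank1 f hf
    have h3 := hrank1 g hg
    linear_combination h1 / 2 - h2 / 2 - h3 / 2
  set t : (Fin n →₀ ℕ) → ℝ := fun α => s (monomial α 1) with ht
  have hts : ∀ f : MvPolynomial (Fin n) ℝ, f.IsHomogeneous d →
      s f = ∑ α ∈ f.support, coeff α f * t α := by
    intro f hf
    conv_lhs => rw [← f.support_sum_monomial_coeff]
    rw [map_sum]
    apply Finset.sum_congr rfl
    intro α hα
    have : monomial α (coeff α f) = (coeff α f) • monomial α (1:ℝ) := by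
      rw [smul_monomial, smul_eq_mul, mul_one]
    rw [this, map_smul, smul_eq_mul]
  -- the key multiplicative relation on monomials
  have hrel : ∀ α β α' β' : Fin n →₀ ℕ, α.degree = d → β.degree = d → α'.degree = d →
      β'.degree = d → α + β = α' + β' → t α * t β = t α' * t β' := by
    intro α β α' β' hα hβ hα' hβ' hsum
    have h1 := hpol (monomial α 1) (monomial β 1)
      (isHomogeneous_monomial _ hα) (isHomogeneous_monomial _ hβ)
    have h2 := hpol (monomial α' 1) (monomial β' 1)
      (isHomogeneous_monomial _ hα') (isHomogeneous_monomial _ hβ')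
    rw [monomial_mul, mul_one] at h1 h2
    rw [hsum] at h1
    have := h1.symm.trans h2
    exact mul_left_cancel₀ hlam this
  -- find a monomial where s is nonzero
  obtain ⟨f₀, hf₀, hsf₀⟩ := hs_ne
  rw [hts f₀ hf₀] at hsf₀
  obtain ⟨γ, hγmem, hγne⟩ := Finset.exists_ne_zero_of_sum_ne_zero hsf₀
  have htγ : t γ ≠ 0 := fun h => hγne (by rw [h, mul_zero])
  have hγd : γ.degree = d := hsuppdeg f₀ hf₀ γ hγmem
  have hγ0 : γ ≠ 0 := by
    intro h
    rw [h, map_zero] at hγd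
    omega
  obtain ⟨j, hj⟩ := Finsupp.support_nonempty_iff.mpr hγ0
  have hγj : γ j ≠ 0 := Finsupp.mem_support_iff.mp hj
  set δ : Fin n →₀ ℕ := γ - Finsupp.single j 1 with hδ
  have hδγ : δ + Finsupp.single j 1 = γ :=
    tsub_add_cancel_of_le (Finsupp.single_le_iff.mpr (Nat.one_le_iff_ne_zero.mpr hγj))
  have hδd : δ.degree + 1 = d := by rw [← hγd, ← hδγ, hdegadd]
  set v : Fin n → ℝ := fun i => t (δ + Finsupp.single i 1) / t γ with hv
  have hvj : v j = 1 := by rw [hv]; simp only [hδγ]; exact div_self htγ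
  -- product bookkeeping
  have hprodadd : ∀ (β : Fin n →₀ ℕ) (i : Fin n),
      (∏ i', v i' ^ ((β + Finsupp.single i 1 : Fin n →₀ ℕ) i')) = (∏ i', v i' ^ β i') * v i := by
    intro β i
    simp only [Finsupp.add_apply, pow_add, Finset.prod_mul_distrib]
    congr 1
    rw [Fintype.prod_eq_single i (fun x hx => by simp [Finsupp.single_apply, (Ne.symm hx)])]
    simp
  -- the move lemma
  have hmove : ∀ (β : Fin n →₀ ℕ) (i : Fin n), β.degree + 1 = d →
      t (β + Finsupp.single i 1) = v i * t (β + Finsupp.single j 1) := by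
    intro β i hβ
    have hr := hrel (β + Finsupp.single i 1) γ (β + Finsupp.single j 1)
      (δ + Finsupp.single i 1) (by rw [hdegadd]; omega) hγd (by rw [hdegadd]; omega)
      (by rw [hdegadd]; omega) (by rw [← hδγ]; abel)
    rw [hv]
    field_simp
    linear_combination hr
  set T0 : ℝ := t (Finsupp.single j d) with hT0
  -- main induction
  have key : ∀ k (α : Fin n →₀ ℕ), α.degree = d → d - α j ≤ k →
      t α = (∏ i, v i ^ α i) * T0 := by
    intro k
    induction k with
    | zero =>
      intro α hα hk
      have hαj : α j = d := by
        have h1 := Finsupp.le_degree j α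
        omega
      have hαeq : α = Finsupp.single j d := by
        ext i
        rcases eq_or_ne i j with rfl | hij
        · simp [hαj]
        · have hsum : ∑ i', α i' = d := by rw [← hdeg, hα]
          have h2 := Finset.add_sum_erase Finset.univ α (Finset.mem_univ j)
          have h3 : ∑ i' ∈ Finset.univ.erase j, α i' = 0 := by omega
          have h4 : α i = 0 := by
            have := (Finset.sum_eq_zero_iff.mp h3) i (Finset.mem_erase.mpr ⟨hij, Finset.mem_univ i⟩)
            exact this
          simp [Finsupp.single_apply, Ne.symm hij, h4]
      rw [hαeq]
      have hprod : (∏ i, v i ^ (Finsupp.single j d) i) = 1 := by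
        rw [Fintype.prod_eq_single j (fun x hx => by simp [Finsupp.single_apply, (Ne.symm hx)])]
        simp [hvj]
      rw [hprod, one_mul]
    | succ k ih =>
      intro α hα hk
      rcases le_or_gt (d - α j) k with h | h
      · exact ih α hα h
      have hαj : α j < d := by omega
      have hex : ∃ i, i ≠ j ∧ α i ≠ 0 := by
        by_contra hc
        push_neg at hc
        have hsum : ∑ i', α i' = d := by rw [← hdeg, hα]
        rw [Fintype.sum_eq_single j (fun x hx => hc x hx)] at hsum
        omega
      obtain ⟨i, hij, hαi⟩ := hex
      set β : Fin n →₀ ℕ := α - Finsupp.single i 1 with hβ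
      have hβα : β + Finsupp.single i 1 = α :=
        tsub_add_cancel_of_le (Finsupp.single_le_iff.mpr (Nat.one_le_iff_ne_zero.mpr hαi))
      have hβd : β.degree + 1 = d := by rw [← hα, ← hβα, hdegadd]
      have hβj : β j = α j := by
        rw [← hβα]
        simp [Finsupp.single_apply, hij]
      have h1 : t α = v i * t (β + Finsupp.single j 1) := by
        rw [← hβα]; exact hmove β i hβd
      have h2 : t (β + Finsupp.single j 1) =
          (∏ i', v i' ^ ((β + Finsupp.single j 1 : Fin n →₀ ℕ) i')) * T0 := by
        apply ih
        · rw [hdegadd]; omega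
        · simp only [Finsupp.add_apply, Finsupp.single_eq_same]
          omega
      rw [h1, h2, hprodadd, ← hβα, hprodadd, hvj]
      ring
  -- conclude
  refine ⟨v, lam * T0 ^ 2, ?_⟩
  intro f hf
  have hsf : s f = T0 * eval v f := by
    rw [hts f hf, eval_eq', Finset.mul_sum]
    apply Finset.sum_congr rfl
    intro α hα
    rw [key d α (hsuppdeg f hf α hα) (by omega)]
    ring
  rw [hrank1 f hf, hsf]
  ring
end

section
/- Let f₁,…,f_k ∈ H(n,d) and let v₁,…,v_m ∈ ℝⁿ∖{0} be pairwise non-proportional points such that the common real zeros of f₁,…,f_k in ℝⁿ∖{0} are exactly the real scalar multiples of the v_i. Suppose s ∈ ℝ^m has all coordinates strictly positive and there exists p ∈ H(n,2d) with p(v_i) = s_i for all i. Then there exists a nonnegative form p̄ ∈ P(n,2d) with p̄(v_i) = s_i for all i. (In other words, the intersection of the image of H(n,2d) under evaluation at the v_i with the open positive orthant is contained in the image of P(n,2d).) -/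
/-!
Let `g = ∑ fᵢ²`. It is a nonnegative form of degree `2d` vanishing exactly on the lines `ℝ vⱼ`,
where `p` is positive since `p(c vⱼ) = c^(2d) sⱼ`. On the unit sphere, `p` is therefore positive
wherever `g` vanishes, so by compactness `p + t g ≥ 0` there for some `t ≥ 0`; by homogeneity of
even degree `p + t g` is nonnegative everywhere, and it still takes the values `sⱼ` at the `vⱼ`.
-/

open MvPolynomial

theorem MvPolynomial.IsHomogeneous.eval_smul {σ R : Type*} [CommSemiring R]
    {φ : MvPolynomial σ R} {N : ℕ} (hφ : φ.IsHomogeneous N) (c : R) (x : σ → R) :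
    eval (c • x) φ = c ^ N * eval x φ := by
  rw [eval_eq, eval_eq, Finset.mul_sum]
  refine Finset.sum_congr rfl fun e he => ?_
  have hdeg : ∑ i ∈ e.support, e i = N := by
    simpa [Finsupp.weight_apply, Finsupp.sum] using hφ (mem_support_iff.mp he)
  simp only [← hdeg, Pi.smul_apply, smul_eq_mul, mul_pow, Finset.prod_mul_distrib,
    Finset.prod_pow_eq_pow_sum]
  ring

theorem MvPolynomial.IsHomogeneous.eval_zero {σ R : Type*} [CommSemiring R]
    {φ : MvPolynomial σ R} {N : ℕ} (hφ : φ.IsHomogeneous N) (hN : N ≠ 0) :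
    eval 0 φ = 0 := by
  simpa [zero_pow hN] using hφ.eval_smul 0 0

theorem MvPolynomial.IsHomogeneous.nonneg_of_nonneg_on_sphere {σ : Type*} [Fintype σ]
    {φ : MvPolynomial σ ℝ} {d : ℕ} (hφ : φ.IsHomogeneous (2 * d)) (hd : d ≠ 0)
    (h : ∀ x ∈ Metric.sphere (0 : σ → ℝ) 1, 0 ≤ eval x φ) (x : σ → ℝ) :
    0 ≤ eval x φ := by
  rcases eq_or_ne x 0 with rfl | hx
  · rw [hφ.eval_zero (by omega)]
  have hxn : ‖x‖ ≠ 0 := norm_ne_zero_iff.mpr hx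
  have hu : ‖x‖⁻¹ • x ∈ Metric.sphere (0 : σ → ℝ) 1 := by
    simp [norm_smul, hxn]
  have hxu : x = ‖x‖ • ‖x‖⁻¹ • x := by rw [smul_smul, mul_inv_cancel₀ hxn, one_smul]
  rw [hxu, hφ.eval_smul, pow_mul]
  exact mul_nonneg (pow_nonneg (sq_nonneg _) d) (h _ hu)

theorem IsCompact.exists_nonneg_add_mul {X : Type*} [TopologicalSpace X] {K : Set X}
    (hK : IsCompact K) {P G : X → ℝ} (hP : Continuous P) (hG : Continuous G)
    (hG0 : ∀ x ∈ K, 0 ≤ G x) (hPG : ∀ x ∈ K, G x = 0 → 0 < P x) :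
    ∃ t : ℝ, 0 ≤ t ∧ ∀ x ∈ K, 0 ≤ P x + t * G x := by
  set T := K ∩ {x | P x ≤ 0}
  have hT : IsCompact T := hK.inter_right (isClosed_le hP continuous_const)
  obtain ⟨ε, hε, hεG⟩ : ∃ ε, 0 < ε ∧ ∀ x ∈ T, ε ≤ G x :=
    hT.exists_forall_le' hG.continuousOn fun x hx =>
      (hG0 x hx.1).lt_of_ne fun h => (hPG x hx.1 h.symm).not_ge hx.2
  obtain ⟨C, hC⟩ := hK.exists_bound_of_continuousOn hP.continuousOn
  refine ⟨|C| / ε, by positivity, fun x hx => ?_⟩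
  have hPx : -|C| ≤ P x := by
    have := hC x hx
    rw [Real.norm_eq_abs] at this
    linarith [neg_abs_le (P x), le_abs_self C]
  by_cases hxP : P x ≤ 0
  · have : |C| ≤ |C| / ε * G x := by
      calc |C| = |C| / ε * ε := by field_simp
        _ ≤ |C| / ε * G x := by gcongr; exact hεG x ⟨hx, hxP⟩
    linarith
  · have := mul_nonneg (by positivity : 0 ≤ |C| / ε) (hG0 x hx)
    linarith

theorem MvPolynomial.eval_sum_sq_nonneg {ι σ : Type*} (s : Finset ι)
    (f : ι → MvPolynomial σ ℝ) (x : σ → ℝ) : 0 ≤ eval x (∑ i ∈ s, f i ^ 2) := by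
  simp only [map_sum, map_pow]
  positivity

theorem MvPolynomial.eval_sum_sq_eq_zero_iff {ι σ : Type*} (s : Finset ι)
    (f : ι → MvPolynomial σ ℝ) (x : σ → ℝ) :
    eval x (∑ i ∈ s, f i ^ 2) = 0 ↔ ∀ i ∈ s, eval x (f i) = 0 := by
  simp only [map_sum, map_pow]
  rw [Finset.sum_eq_zero_iff_of_nonneg fun i _ => sq_nonneg _]
  simp only [sq_eq_zero_iff]

theorem stmt_10_general
    (n d k m : ℕ) (hd : 0 < d)
    (f : Fin k → MvPolynomial (Fin n) ℝ)
    (hf : ∀ i, (f i).IsHomogeneous d)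
    (v : Fin m → Fin n → ℝ)
    (hv0 : ∀ i, v i ≠ 0)
    (hzeros : ∀ x : Fin n → ℝ, x ≠ 0 →
      ((∀ i, eval x (f i) = 0) ↔ ∃ (j : Fin m) (c : ℝ), x = c • v j))
    (s : Fin m → ℝ) (hs : ∀ i, 0 < s i)
    (p : MvPolynomial (Fin n) ℝ)
    (hp_hom : p.IsHomogeneous (2 * d))
    (hp_val : ∀ i, eval (v i) p = s i) :
    ∃ pb : MvPolynomial (Fin n) ℝ, pb.IsHomogeneous (2 * d) ∧
      (∀ x : Fin n → ℝ, 0 ≤ eval x pb) ∧ ∀ i, eval (v i) pb = s i := by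
  set g := ∑ i, f i ^ 2
  have hg_zero_iff (x : Fin n → ℝ) : eval x g = 0 ↔ ∀ i, eval x (f i) = 0 := by
    simpa only [Finset.mem_univ, true_imp_iff] using eval_sum_sq_eq_zero_iff Finset.univ f x
  have hg_hom : g.IsHomogeneous (2 * d) :=
    IsHomogeneous.sum _ _ _ fun i _ => mul_comm d 2 ▸ (hf i).pow 2
  have hg_v (j : Fin m) : eval (v j) g = 0 :=
    (hg_zero_iff _).mpr ((hzeros _ (hv0 j)).mpr ⟨j, 1, (one_smul _ _).symm⟩)
  have hp_pos (x : Fin n → ℝ) (hx : x ≠ 0) (hgx : eval x g = 0) : 0 < eval x p := by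
    obtain ⟨j, c, rfl⟩ := (hzeros x hx).mp ((hg_zero_iff x).mp hgx)
    have hc : c ≠ 0 := by rintro rfl; simp at hx
    rw [hp_hom.eval_smul, hp_val, pow_mul]
    exact mul_pos (pow_pos (by positivity) d) (hs j)
  obtain ⟨t, -, hpt⟩ := (isCompact_sphere (0 : Fin n → ℝ) 1).exists_nonneg_add_mul
    (continuous_eval p) (continuous_eval g) (fun x _ => eval_sum_sq_nonneg _ f x)
    (fun x hx => hp_pos x (Metric.ne_of_mem_sphere hx one_ne_zero))
  have hpb_hom : (p + C t * g).IsHomogeneous (2 * d) := hp_hom.add (hg_hom.C_mul t)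
  refine ⟨p + C t * g, hpb_hom, hpb_hom.nonneg_of_nonneg_on_sphere hd.ne' fun x hx => ?_,
    fun j => by simp [hp_val, hg_v]⟩
  simpa using hpt x hx

theorem stmt_10
    (n d k m : ℕ) (hn : 0 < n) (hd : 0 < d)
    (f : Fin k → MvPolynomial (Fin n) ℝ)
    (hf : ∀ i, (f i).IsHomogeneous d)
    (v : Fin m → Fin n → ℝ)
    (hv0 : ∀ i, v i ≠ 0)
    (hvprop : ∀ i j, i ≠ j → ∀ c : ℝ, v i ≠ c • v j)
    (hzeros : ∀ x : Fin n → ℝ, x ≠ 0 →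
      ((∀ i, eval x (f i) = 0) ↔ ∃ (j : Fin m) (c : ℝ), x = c • v j))
    (s : Fin m → ℝ) (hs : ∀ i, 0 < s i)
    (p : MvPolynomial (Fin n) ℝ)
    (hp_hom : p.IsHomogeneous (2 * d))
    (hp_val : ∀ i, eval (v i) p = s i) :
    ∃ pb : MvPolynomial (Fin n) ℝ, pb.IsHomogeneous (2 * d) ∧
      (∀ x : Fin n → ℝ, 0 ≤ eval x pb) ∧ ∀ i, eval (v i) pb = s i :=
  stmt_10_general n d k m hd f hf v hv0 hzeros s hs p hp_hom hp_val
end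

section
/- For m ≥ 2 let T_m = {x ∈ ℝ^m : x_i ≥ 0 for all i, and √x₁ + … + √x_m ≥ 2√x_k for all k}. Then T_m is a closed convex cone, and T_m equals the convex hull of the set of points x ∈ ℝ^m with nonnegative coordinates for which √x₁ + … + √x_m = 2√x_k for some k. -/
/-!
With `F x = (∑ i, √(x i)) ^ 2`, a nonnegative `x` lies in `T_m` iff `4 * x k ≤ F x` for all `k`.
Minkowski's inequality for the planar vectors `(√(x i), √(y i))` makes `F` superadditive, and `F`
is homogeneous, so `T_m` is a convex cone.

For the convex hull, vary a single coordinate `x k` of a point of `T_m`. At the top of its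
admissible range the `k`-th constraint is tight; at the bottom either another constraint is tight
or `x k = 0`, and the latter case is handled by induction on the support of `x`.
-/

/-- The cone T_m ⊆ ℝ^m: nonnegative vectors x with √x₁ + … + √x_m ≥ 2√x_k for all k. -/
def Tcone (m : ℕ) : Set (Fin m → ℝ) :=
  {x | (∀ i, 0 ≤ x i) ∧ ∀ k, 2 * Real.sqrt (x k) ≤ ∑ i, Real.sqrt (x i)}

open Finset Function

theorem sq_sum_sqrt_add_sq_sum_sqrt_le {ι : Type*} (s : Finset ι) {x y : ι → ℝ}
    (hx : ∀ i ∈ s, 0 ≤ x i) (hy : ∀ i ∈ s, 0 ≤ y i) :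
    (∑ i ∈ s, √(x i)) ^ 2 + (∑ i ∈ s, √(y i)) ^ 2 ≤ (∑ i ∈ s, √(x i + y i)) ^ 2 := by
  set z : ι → ℂ := fun i => √(x i) + √(y i) * Complex.I
  have hz : ∀ i ∈ s, ‖z i‖ = √(x i + y i) := fun i hi => by
    rw [Complex.norm_def, Complex.normSq_add_mul_I, Real.sq_sqrt (hx i hi),
      Real.sq_sqrt (hy i hi)]
  have hsum : ∑ i ∈ s, z i = ↑(∑ i ∈ s, √(x i)) + ↑(∑ i ∈ s, √(y i)) * Complex.I := by
    simp [z, sum_add_distrib, sum_mul]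
  calc (∑ i ∈ s, √(x i)) ^ 2 + (∑ i ∈ s, √(y i)) ^ 2 = ‖∑ i ∈ s, z i‖ ^ 2 := by
        rw [Complex.sq_norm, hsum, Complex.normSq_add_mul_I]
    _ ≤ (∑ i ∈ s, ‖z i‖) ^ 2 := by gcongr; exact norm_sum_le _ _
    _ = (∑ i ∈ s, √(x i + y i)) ^ 2 := by rw [sum_congr rfl hz]

theorem mem_Tcone_iff {m : ℕ} {x : Fin m → ℝ} :
    x ∈ Tcone m ↔ (∀ i, 0 ≤ x i) ∧ ∀ k, 4 * x k ≤ (∑ i, √(x i)) ^ 2 := by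
  refine and_congr_right fun hx => forall_congr' fun k => ?_
  rw [← pow_le_pow_iff_left₀ (by positivity) (by positivity) two_ne_zero, mul_pow,
    Real.sq_sqrt (hx k)]
  norm_num

theorem add_mem_Tcone {m : ℕ} {x y : Fin m → ℝ} (hx : x ∈ Tcone m) (hy : y ∈ Tcone m) :
    x + y ∈ Tcone m := by
  rw [mem_Tcone_iff] at *
  refine ⟨fun i => add_nonneg (hx.1 i) (hy.1 i), fun k => ?_⟩
  calc 4 * (x + y) k = 4 * x k + 4 * y k := by simp [mul_add]
    _ ≤ (∑ i, √(x i)) ^ 2 + (∑ i, √(y i)) ^ 2 := add_le_add (hx.2 k) (hy.2 k)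
    _ ≤ _ := sq_sum_sqrt_add_sq_sum_sqrt_le _ (fun i _ => hx.1 i) (fun i _ => hy.1 i)

theorem smul_mem_Tcone {m : ℕ} {c : ℝ} (hc : 0 ≤ c) {x : Fin m → ℝ} (hx : x ∈ Tcone m) :
    c • x ∈ Tcone m := by
  refine ⟨fun i => mul_nonneg hc (hx.1 i), fun k => ?_⟩
  simp only [Pi.smul_apply, smul_eq_mul, Real.sqrt_mul hc, ← mul_sum, mul_left_comm (2 : ℝ)]
  exact mul_le_mul_of_nonneg_left (hx.2 k) (Real.sqrt_nonneg c)

theorem convex_Tcone (m : ℕ) : Convex ℝ (Tcone m) :=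
  fun _ hx _ hy _ _ ha hb _ => add_mem_Tcone (smul_mem_Tcone ha hx) (smul_mem_Tcone hb hy)

theorem isClosed_Tcone (m : ℕ) : IsClosed (Tcone m) := by
  simp only [Tcone, Set.ofPred_and, Set.ofPred_forall]
  exact (isClosed_iInter fun i => isClosed_le (by fun_prop) (by fun_prop)).inter
    (isClosed_iInter fun k => isClosed_le (by fun_prop) (by fun_prop))

def TconeTight (m : ℕ) : Set (Fin m → ℝ) :=
  {x : Fin m → ℝ | (∀ i, 0 ≤ x i) ∧ ∃ k, ∑ i, Real.sqrt (x i) = 2 * Real.sqrt (x k)}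

theorem TconeTight_subset_Tcone (m : ℕ) : TconeTight m ⊆ Tcone m := by
  rintro x ⟨hx, k, hk⟩
  refine ⟨hx, fun j => ?_⟩
  rcases eq_or_ne j k with rfl | hjk
  · exact hk.ge
  · have := add_le_sum (fun i _ => Real.sqrt_nonneg (x i)) (mem_univ j) (mem_univ k) hjk
    linarith

theorem sum_sqrt_update {ι : Type*} [Fintype ι] [DecidableEq ι] (x : ι → ℝ) (k : ι) (a : ℝ) :
    ∑ i, √(update x k a i) = √a + (∑ i, √(x i) - √(x k)) := by
  simp only [apply_update (fun _ => Real.sqrt), sum_update_of_mem (mem_univ k), ← erase_eq,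
    sum_erase_eq_sub (mem_univ k)]

theorem update_nonneg {ι : Type*} [DecidableEq ι] {x : ι → ℝ} (hx : ∀ i, 0 ≤ x i) (k : ι)
    {a : ℝ} (ha : 0 ≤ a) (i : ι) : 0 ≤ update x k a i := by
  rcases eq_or_ne i k with rfl | hik
  · simpa
  · simpa [hik] using hx i

/-- `x` lies between `update x k (t ^ 2)` and `update x k (R ^ 2)`, `R = ∑_{i ≠ k} √(x i)`, and the
`k`-th constraint is tight at the latter. -/
theorem mem_convexHull_of_update_mem {m : ℕ} {x : Fin m → ℝ} (hx : x ∈ Tcone m) {k : Fin m}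
    {t : ℝ} (ht : 0 ≤ t) (htk : t ≤ √(x k))
    (hq : update x k (t ^ 2) ∈ convexHull ℝ (TconeTight m)) :
    x ∈ convexHull ℝ (TconeTight m) := by
  set R := ∑ i, √(x i) - √(x k)
  have hkR : √(x k) ≤ R := by linarith [hx.2 k]
  have hp : update x k (R ^ 2) ∈ TconeTight m :=
    ⟨update_nonneg hx.1 k (sq_nonneg R), k, by
      rw [sum_sqrt_update, update_self, Real.sqrt_sq ((Real.sqrt_nonneg _).trans hkR)]; ring⟩
  have hxk : x k ∈ segment ℝ (t ^ 2) (R ^ 2) := by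
    rw [segment_eq_Icc (by gcongr; exact htk.trans hkR), ← Real.sq_sqrt (hx.1 k)]
    exact ⟨by gcongr, by gcongr⟩
  have hseg := Pi.image_update_segment (𝕜 := ℝ) k (t ^ 2) (R ^ 2) x ▸ Set.mem_image_of_mem _ hxk
  rw [update_eq_self] at hseg
  exact (convex_convexHull ℝ _).segment_subset hq (subset_convexHull ℝ _ hp) hseg

theorem Tcone_subset_convexHull {m : ℕ} (hm : 0 < m) :
    Tcone m ⊆ convexHull ℝ (TconeTight m) := by
  suffices ∀ s : Finset (Fin m), ∀ x ∈ Tcone m, (∀ i ∉ s, x i = 0) →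
      x ∈ convexHull ℝ (TconeTight m) from
    fun x hx => this univ x hx (by simp)
  intro s
  induction s using Finset.induction_on with
  | empty =>
    intro x hx hx0
    obtain rfl : x = 0 := funext fun i => hx0 i (notMem_empty i)
    exact subset_convexHull ℝ _ ⟨fun _ => le_rfl, ⟨0, hm⟩, by simp⟩
  | insert k s hks ih =>
    intro x hx hxs
    set R := ∑ i, √(x i) - √(x k)
    by_cases hR : ∀ j ≠ k, 2 * √(x j) ≤ R
    · refine mem_convexHull_of_update_mem (k := k) hx le_rfl (Real.sqrt_nonneg _)
        (ih _ ?_ fun i hi => ?_)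
      · refine ⟨update_nonneg hx.1 k (sq_nonneg 0), fun j => ?_⟩
        rw [sum_sqrt_update]
        rcases eq_or_ne j k with rfl | hjk
        · rw [update_self, zero_pow two_ne_zero, Real.sqrt_zero]
          linarith [hx.2 j, Real.sqrt_nonneg (x j)]
        · simpa [hjk] using hR j hjk
      · rcases eq_or_ne i k with rfl | hik
        · simp
        · simpa [hik] using hxs i (by simp [hik, hi])
    · push Not at hR
      obtain ⟨j, hjk, hj⟩ := hR
      have hjR : 0 ≤ 2 * √(x j) - R := by linarith
      refine mem_convexHull_of_update_mem (k := k) hx hjR (by linarith [hx.2 j])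
        (subset_convexHull ℝ _ ?_)
      refine ⟨update_nonneg hx.1 k (sq_nonneg _), j, ?_⟩
      rw [sum_sqrt_update, update_of_ne hjk, Real.sqrt_sq hjR]
      ring

theorem stmt_12 (m : ℕ) (hm : 2 ≤ m) :
    IsClosed (Tcone m) ∧
    Convex ℝ (Tcone m) ∧
    (∀ c : ℝ, 0 ≤ c → ∀ x ∈ Tcone m, c • x ∈ Tcone m) ∧
    Tcone m = convexHull ℝ
      {x : Fin m → ℝ | (∀ i, 0 ≤ x i) ∧
        ∃ k, ∑ i, Real.sqrt (x i) = 2 * Real.sqrt (x k)} :=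
  ⟨isClosed_Tcone m, convex_Tcone m, fun _ hc _ hx => smul_mem_Tcone hc hx,
    (Tcone_subset_convexHull (by omega)).antisymm
      (convexHull_min (TconeTight_subset_Tcone m) (convex_Tcone m))⟩
end

section
/- Let w₁,…,w_m ∈ ℝⁿ and let a₁,…,a_m ∈ {−1, +1}. Suppose the image of H(n,d) under the evaluation map E(f) = (f(w₁),…,f(w_m)) is exactly the hyperplane L = {x ∈ ℝ^m : a₁x₁ + … + a_mx_m = 0}. Then the image of the sums-of-squares cone Σ(n,2d) under evaluation at w₁,…,w_m equals T_m = {x ∈ ℝ^m : x_i ≥ 0 for all i, and √x₁ + … + √x_m ≥ 2√x_k for all k}. -/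
/-!
If `p = ∑ q_j ^ 2`, the vectors `V_i = (q_j (w_i))_j ∈ ℝ^r` have norms `√(p (w_i))`, and
`∑ a_i V_i = 0` because every `q_j` evaluates into the hyperplane `L`; the triangle inequality
then gives `2 ‖V_k‖ ≤ ∑ ‖V_i‖`.

Conversely, the inequalities defining `T_m` are exactly the polygon inequalities for the lengths
`s_i = √y_i`, so there are `u_i ∈ ℂ` with `‖u_i‖ = s_i` and `∑ u_i = 0`. Lifting the vectors
`(a_i Re u_i)` and `(a_i Im u_i)` of `L` to forms `F` and `G`, the form `F ^ 2 + G ^ 2` takes the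
values `y`. The polygon is obtained from a triangle: the longest side against the two groups of a
greedy splitting of the other sides whose totals differ by at most the longest one.
-/

open MvPolynomial

open Finset

theorem Complex.exists_norm_eq_norm_add_eq {A b c : ℝ} (hA : 0 ≤ A) (hb : 0 ≤ b) (hc : 0 ≤ c)
    (hAbc : A ≤ b + c) (hbAc : b ≤ A + c) (hcAb : c ≤ A + b) :
    ∃ z : ℂ, ‖z‖ = b ∧ ‖A + z‖ = c := by
  rcases hA.eq_or_lt with rfl | hA
  · exact ⟨b, by simp [hb], by simp [abs_of_nonneg hb]; linarith⟩
  -- the law of cosines fixes the real part of `z`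
  set p := (c ^ 2 - b ^ 2 - A ^ 2) / (2 * A)
  -- `(2 A) ^ 2 (b ^ 2 - p ^ 2) = ((A + b) ^ 2 - c ^ 2) (c ^ 2 - (A - b) ^ 2)`, as in Heron's formula
  have hp : p ^ 2 ≤ b ^ 2 := by
    rw [div_pow, div_le_iff₀ (by positivity)]
    nlinarith [mul_nonneg (mul_nonneg (by linarith : 0 ≤ A + b + c) (by linarith : 0 ≤ A + b - c))
      (mul_nonneg (by linarith : 0 ≤ c - A + b) (by linarith : 0 ≤ c + A - b))]
  have hq := Real.sq_sqrt (sub_nonneg.mpr hp)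
  refine ⟨⟨p, √(b ^ 2 - p ^ 2)⟩, ?_, ?_⟩
  · rw [← sq_eq_sq₀ (norm_nonneg _) hb, Complex.sq_norm, Complex.normSq_mk]
    linear_combination hq
  · rw [← sq_eq_sq₀ (norm_nonneg _) hc, Complex.sq_norm, Complex.normSq_apply]
    simp only [Complex.add_re, Complex.ofReal_re, Complex.add_im, Complex.ofReal_im, zero_add]
    have hAp : 2 * A * p = c ^ 2 - b ^ 2 - A ^ 2 := by simp only [p]; field_simp
    linear_combination hq + hAp

theorem Complex.exists_unit_triangle {A b c : ℝ} (hA : 0 ≤ A) (hb : 0 ≤ b) (hc : 0 ≤ c)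
    (hAbc : A ≤ b + c) (hbAc : b ≤ A + c) (hcAb : c ≤ A + b) :
    ∃ ζ η : ℂ, ‖ζ‖ = 1 ∧ ‖η‖ = 1 ∧ A + b * ζ + c * η = 0 := by
  obtain ⟨z, hz, hAz⟩ := exists_norm_eq_norm_add_eq hA hb hc hAbc hbAc hcAb
  refine ⟨exp (arg z * I), exp (arg (-(A + z)) * I), norm_exp_ofReal_mul_I _,
    norm_exp_ofReal_mul_I _, ?_⟩
  rw [← hz, ← hAz, ← norm_neg ((A : ℂ) + z), norm_mul_exp_arg_mul_I, norm_mul_exp_arg_mul_I]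
  ring

theorem Finset.exists_subset_abs_two_mul_sum_sub_sum_le {ι : Type*} [DecidableEq ι]
    (T : Finset ι) {s : ι → ℝ} {A : ℝ} (hA : 0 ≤ A) (hs : ∀ i ∈ T, 0 ≤ s i ∧ s i ≤ A) :
    ∃ B ⊆ T, |2 * ∑ i ∈ B, s i - ∑ i ∈ T, s i| ≤ A := by
  induction T using Finset.induction_on with
  | empty => exact ⟨∅, subset_rfl, by simpa⟩
  | @insert j T hj ih =>
    obtain ⟨B, hBT, hB⟩ := ih fun i hi => hs i (mem_insert_of_mem hi)
    obtain ⟨hj0, hjA⟩ := hs j (mem_insert_self j T)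
    rw [abs_le] at hB
    -- greedily put `s j` on the lighter side
    by_cases hpos : 0 ≤ 2 * ∑ i ∈ B, s i - ∑ i ∈ T, s i
    · refine ⟨B, hBT.trans (subset_insert j T), ?_⟩
      rw [sum_insert hj, abs_le]
      constructor <;> linarith
    · refine ⟨insert j B, insert_subset_insert j hBT, ?_⟩
      rw [sum_insert hj, sum_insert fun h => hj (hBT h), abs_le]
      constructor <;> linarith

theorem Complex.exists_sum_eq_zero_of_two_mul_le_sum {ι : Type*} [Fintype ι] {s : ι → ℝ}
    (hs : ∀ i, 0 ≤ s i) (h : ∀ k, 2 * s k ≤ ∑ i, s i) :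
    ∃ u : ι → ℂ, (∀ i, ‖u i‖ = s i) ∧ ∑ i, u i = 0 := by
  classical
  cases isEmpty_or_nonempty ι
  · exact ⟨0, isEmptyElim, by simp⟩
  obtain ⟨k, -, hk⟩ := exists_max_image univ s univ_nonempty
  set T := univ.erase k
  have hkT : s k + ∑ i ∈ T, s i = ∑ i, s i := add_sum_erase _ _ (mem_univ k)
  obtain ⟨B, hBT, hB⟩ :=
    T.exists_subset_abs_two_mul_sum_sub_sum_le (hs k) fun i _ => ⟨hs i, hk i (mem_univ i)⟩
  have hC : ∑ i ∈ T \ B, s i = ∑ i ∈ T, s i - ∑ i ∈ B, s i := sum_sdiff_eq_sub hBT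
  have hsk := h k
  obtain ⟨hB₁, hB₂⟩ := abs_le.mp hB
  obtain ⟨ζ, η, hζ, hη, hclose⟩ :=
    exists_unit_triangle (b := ∑ i ∈ B, s i) (c := ∑ i ∈ T \ B, s i) (hs k)
    (sum_nonneg fun i _ => hs i) (sum_nonneg fun i _ => hs i)
    (by linarith) (by linarith) (by linarith)
  refine ⟨fun i => s i * if i = k then 1 else if i ∈ B then ζ else η, fun i => ?_, ?_⟩
  · rw [norm_mul, Complex.norm_real, Real.norm_of_nonneg (hs i)]
    split_ifs <;> simp [hζ, hη]
  · have hne : ∀ i ∈ T, i ≠ k := fun i hi => (mem_erase.mp hi).1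
    have hsumB : ∑ i ∈ B, (s i : ℂ) * (if i = k then 1 else if i ∈ B then ζ else η) =
        (∑ i ∈ B, s i : ℝ) * ζ := by
      push_cast
      rw [sum_mul]
      exact sum_congr rfl fun i hi => by rw [if_neg (hne i (hBT hi)), if_pos hi]
    have hsumC : ∑ i ∈ T \ B, (s i : ℂ) * (if i = k then 1 else if i ∈ B then ζ else η) =
        (∑ i ∈ T \ B, s i : ℝ) * η := by
      push_cast
      rw [sum_mul]
      refine sum_congr rfl fun i hi => ?_
      obtain ⟨hiT, hiB⟩ := mem_sdiff.mp hi
      rw [if_neg (hne i hiT), if_neg hiB]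
    rw [← add_sum_erase _ _ (mem_univ k), ← sum_sdiff hBT, hsumB, hsumC, if_pos rfl, ← hclose]
    ring

theorem two_mul_norm_le_sum_norm_of_sum_smul_eq_zero {𝕜 E ι : Type*} [NormedField 𝕜]
    [SeminormedAddCommGroup E] [NormedSpace 𝕜 E] [Fintype ι] {a : ι → 𝕜} {v : ι → E}
    (ha : ∀ i, ‖a i‖ = 1) (h : ∑ i, a i • v i = 0) (k : ι) :
    2 * ‖v k‖ ≤ ∑ i, ‖v i‖ := by
  classical
  have hk : a k • v k = -∑ i ∈ univ.erase k, a i • v i :=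
    eq_neg_of_add_eq_zero_left (by rwa [add_sum_erase _ (fun i => a i • v i) (mem_univ k)])
  have : ‖v k‖ ≤ ∑ i ∈ univ.erase k, ‖v i‖ := calc
    ‖v k‖ = ‖a k • v k‖ := by rw [norm_smul, ha, one_mul]
    _ = ‖∑ i ∈ univ.erase k, a i • v i‖ := by rw [hk, norm_neg]
    _ ≤ ∑ i ∈ univ.erase k, ‖a i • v i‖ := norm_sum_le _ _
    _ = ∑ i ∈ univ.erase k, ‖v i‖ := by simp only [norm_smul, ha, one_mul]
  rw [← add_sum_erase _ _ (mem_univ k)]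
  linarith

section

variable {n d m : ℕ} {w : Fin m → Fin n → ℝ} {a : Fin m → ℝ}

theorem IsSOS.eval_mem_Tcone (ha : ∀ i, |a i| = 1)
    (hL : ∀ f : MvPolynomial (Fin n) ℝ, f.IsHomogeneous d → ∑ i, a i * eval (w i) f = 0)
    {p : MvPolynomial (Fin n) ℝ} (hp : IsSOS n d p) : (fun i => eval (w i) p) ∈ Tcone m := by
  obtain ⟨r, q, hq, rfl⟩ := hp
  set V : Fin m → EuclideanSpace ℝ (Fin r) := fun i => WithLp.toLp 2 fun j => eval (w i) (q j)
  have hV : ∀ i, ‖V i‖ = √(eval (w i) (∑ j, q j ^ 2)) := fun i => by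
    simp [EuclideanSpace.norm_eq, V, map_sum]
  have hsum : ∑ i, a i • V i = 0 := by
    ext j
    simp [V, hL (q j) (hq j)]
  refine ⟨fun i => by simp only [map_sum, map_pow]; positivity, fun k => ?_⟩
  simp only [← hV]
  exact two_mul_norm_le_sum_norm_of_sum_smul_eq_zero (fun i => by rw [Real.norm_eq_abs, ha]) hsum k

theorem exists_isSOS_eval_eq_of_mem_Tcone (ha : ∀ i, |a i| = 1)
    (hL : ∀ x : Fin m → ℝ, ∑ i, a i * x i = 0 →
      ∃ f : MvPolynomial (Fin n) ℝ, f.IsHomogeneous d ∧ ∀ i, eval (w i) f = x i)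
    {y : Fin m → ℝ} (hy : y ∈ Tcone m) :
    ∃ p : MvPolynomial (Fin n) ℝ, IsSOS n d p ∧ ∀ i, eval (w i) p = y i := by
  obtain ⟨hy0, hy⟩ := hy
  obtain ⟨u, hu, hu0⟩ :=
    Complex.exists_sum_eq_zero_of_two_mul_le_sum (fun i => Real.sqrt_nonneg (y i)) hy
  have ha2 : ∀ i, a i * a i = 1 := fun i => by rw [← abs_mul_abs_self, ha, one_mul]
  have hlift : ∀ x : Fin m → ℝ, ∑ i, x i = 0 →
      ∃ f : MvPolynomial (Fin n) ℝ, f.IsHomogeneous d ∧ ∀ i, eval (w i) f = a i * x i :=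
    fun x hx => hL _ (by simpa only [← mul_assoc, ha2, one_mul])
  obtain ⟨F, hF, hFw⟩ := hlift (fun i => (u i).re) (by rw [← Complex.re_sum, hu0]; rfl)
  obtain ⟨G, hG, hGw⟩ := hlift (fun i => (u i).im) (by rw [← Complex.im_sum, hu0]; rfl)
  refine ⟨F ^ 2 + G ^ 2, ⟨2, ![F, G], fun j => by fin_cases j <;> assumption,
    by simp [Fin.sum_univ_two]⟩, fun i => ?_⟩
  have hui : (u i).re ^ 2 + (u i).im ^ 2 = y i := by
    rw [← Real.sq_sqrt (hy0 i), ← hu i, Complex.sq_norm, Complex.normSq_apply]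
    ring
  simp only [map_add, map_pow, hFw, hGw]
  linear_combination (a i * a i) * hui + y i * ha2 i

end

theorem stmt_13
    (n d m : ℕ)
    (w : Fin m → Fin n → ℝ)
    (a : Fin m → ℝ) (ha : ∀ i, a i = 1 ∨ a i = -1)
    (himage : {y : Fin m → ℝ | ∃ f : MvPolynomial (Fin n) ℝ,
        f.IsHomogeneous d ∧ ∀ i, eval (w i) f = y i} =
      {x : Fin m → ℝ | ∑ i, a i * x i = 0}) :
    {y : Fin m → ℝ | ∃ p : MvPolynomial (Fin n) ℝ,
        IsSOS n d p ∧ ∀ i, eval (w i) p = y i} = Tcone m := by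
  have ha' : ∀ i, |a i| = 1 := fun i => (abs_eq zero_le_one).mpr (ha i)
  ext y
  constructor
  · rintro ⟨p, hp, hpy⟩
    obtain rfl : (fun i => eval (w i) p) = y := funext hpy
    exact hp.eval_mem_Tcone ha' fun f hf => (Set.ext_iff.mp himage _).mp ⟨f, hf, fun _ => rfl⟩
  · exact exists_isSOS_eval_eq_of_mem_Tcone ha' fun x hx => (Set.ext_iff.mp himage x).mpr hx
end

section
/- Let v₁,…,v_m ∈ ℝⁿ and let u₁,…,u_m be nonzero real numbers. Suppose the image of H(n,d) under the evaluation map E(f) = (f(v₁),…,f(v_m)) is exactly the hyperplane L = {x ∈ ℝ^m : u₁x₁ + … + u_mx_m = 0}. Then the image of the sums-of-squares cone Σ(n,2d) under evaluation at v₁,…,v_m equals the set of x ∈ ℝ^m with all x_i ≥ 0 satisfying |u₁|√x₁ + … + |u_m|√x_m ≥ 2|u_k|√x_k for all k = 1,…,m. -/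
/-!
If `p = ∑ⱼ qⱼ²`, the vectors `bᵢ = (qⱼ(vᵢ))ⱼ` have `‖bᵢ‖² = p(vᵢ)`, and `∑ᵢ uᵢ bᵢ = 0` because
each `(qⱼ(vᵢ))ᵢ` lies in `L`; the inequalities are the polygon inequalities for the vectors `uᵢ bᵢ`.
Conversely, the inequalities say that segments of lengths `|uᵢ| √yᵢ` close up to a planar polygon
`w ∈ ℂᵐ`, `∑ wᵢ = 0`. Then `(Re wᵢ / uᵢ)ᵢ` and `(Im wᵢ / uᵢ)ᵢ` lie in `L`, so they are the values
of forms `f₁`, `f₂` of degree `d`, and `f₁² + f₂²` takes the values `yᵢ`.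
-/

open MvPolynomial

theorem Finset.two_mul_norm_le_sum_norm_of_sum_eq_zero {ι E : Type*} [SeminormedAddCommGroup E]
    {s : Finset ι} {z : ι → E} (hz : ∑ i ∈ s, z i = 0) {k : ι} (hk : k ∈ s) :
    2 * ‖z k‖ ≤ ∑ i ∈ s, ‖z i‖ := by
  classical
  rw [← Finset.add_sum_erase s z hk, add_eq_zero_iff_eq_neg] at hz
  have : ‖z k‖ ≤ ∑ i ∈ s.erase k, ‖z i‖ := hz ▸ (norm_neg _).trans_le (norm_sum_le _ _)
  rw [← Finset.add_sum_erase s _ hk]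
  linarith

theorem Complex.exists_norm_eq_norm_sub_eq {z : ℂ} {r t : ℝ}
    (hlo : |‖z‖ - r| ≤ t) (hhi : t ≤ ‖z‖ + r) :
    ∃ w : ℂ, ‖w‖ = r ∧ ‖z - w‖ = t := by
  have hr : 0 ≤ r := by linarith [le_abs_self (‖z‖ - r)]
  set g : ℝ → ℝ := fun θ => ‖(‖z‖ : ℂ) - r * exp (θ * I)‖
  have hg : ContinuousOn g (Set.Icc 0 Real.pi) := by fun_prop
  have hg0 : g 0 = |‖z‖ - r| := by simp [g, ← ofReal_sub, norm_real]
  have hgπ : g Real.pi = ‖z‖ + r := by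
    simp [g, ← ofReal_add, norm_real, abs_of_nonneg (add_nonneg (norm_nonneg z) hr)]
  obtain ⟨θ, -, hθ⟩ := intermediate_value_Icc Real.pi_pos.le hg
    (hg0 ▸ hgπ ▸ ⟨hlo, hhi⟩ : t ∈ Set.Icc (g 0) (g Real.pi))
  refine ⟨r * exp ((arg z + θ) * I), ?_, ?_⟩
  · rw [norm_mul, ← ofReal_add, norm_exp_ofReal_mul_I, norm_real, Real.norm_of_nonneg hr, mul_one]
  · calc ‖z - r * exp ((arg z + θ) * I)‖
          = ‖exp (arg z * I) * ((‖z‖ : ℂ) - r * exp (θ * I))‖ := by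
            rw [add_mul, exp_add]
            nth_rw 1 [← norm_mul_exp_arg_mul_I z]
            ring_nf
        _ = t := by rw [norm_mul, norm_exp_ofReal_mul_I, one_mul, ← hθ]

/-- The target `z` is generalized so that the sides can be laid down one at a time: the
hypotheses say that the `c i` together with `‖z‖` are the side lengths of a closed polygon. -/
theorem Complex.exists_sum_eq_of_two_mul_le {ι : Type*} [DecidableEq ι] (s : Finset ι)
    {c : ι → ℝ} (hc : ∀ i ∈ s, 0 ≤ c i) {z : ℂ} (hz : ‖z‖ ≤ ∑ i ∈ s, c i)
    (hk : ∀ k ∈ s, 2 * c k ≤ ∑ i ∈ s, c i + ‖z‖) :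
    ∃ w : ι → ℂ, (∀ i ∈ s, ‖w i‖ = c i) ∧ ∑ i ∈ s, w i = z := by
  induction s using Finset.induction_on generalizing z with
  | empty => exact ⟨0, by simp, by simpa [eq_comm] using hz⟩
  | insert a s ha ih =>
    rw [Finset.forall_mem_insert] at hc hk
    rw [Finset.sum_insert ha] at hz hk
    set S := ∑ i ∈ s, c i
    have hcS : ∀ k ∈ s, c k ≤ S := fun k hk => Finset.single_le_sum hc.2 hk
    obtain ⟨wa, hwa, hzwa⟩ := exists_norm_eq_norm_sub_eq (z := z) (r := c a)
      (t := min S (‖z‖ + c a))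
      (abs_sub_le_iff.mpr ⟨le_min (by linarith) (by linarith [hc.1]),
        le_min (by linarith [hk.1]) (by linarith [norm_nonneg z])⟩) (min_le_right _ _)
    obtain ⟨w, hw, hwz⟩ := ih hc.2 (hzwa.trans_le (min_le_left _ _)) fun k hks => by
      rcases min_choice S (‖z‖ + c a) with h | h <;> rw [hzwa, h]
      · linarith [hcS k hks]
      · linarith [hk.2 k hks]
    refine ⟨Function.update w a wa, ?_, ?_⟩
    · rw [Finset.forall_mem_insert, Function.update_self]
      refine ⟨hwa, fun i hi => ?_⟩
      rw [Function.update_of_ne (ne_of_mem_of_not_mem hi ha)]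
      exact hw i hi
    · rw [Finset.sum_insert ha, Function.update_self,
        Finset.sum_congr rfl fun i hi => Function.update_of_ne (ne_of_mem_of_not_mem hi ha) _ _,
        hwz, add_sub_cancel]

namespace IsSOS

variable {n d m : ℕ} {p : MvPolynomial (Fin n) ℝ}

theorem eval_nonneg (hp : IsSOS n d p) (x : Fin n → ℝ) : 0 ≤ eval x p := by
  obtain ⟨r, q, -, rfl⟩ := hp
  simpa using Finset.sum_nonneg fun j _ => sq_nonneg (eval x (q j))

theorem two_mul_abs_mul_sqrt_eval_le {v : Fin m → Fin n → ℝ} {u : Fin m → ℝ}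
    (hL : ∀ f : MvPolynomial (Fin n) ℝ, f.IsHomogeneous d → ∑ i, u i * eval (v i) f = 0)
    (hp : IsSOS n d p) (k : Fin m) :
    2 * |u k| * √(eval (v k) p) ≤ ∑ i, |u i| * √(eval (v i) p) := by
  obtain ⟨r, q, hq, rfl⟩ := hp
  let b : Fin m → EuclideanSpace ℝ (Fin r) := fun i => WithLp.toLp 2 fun j => eval (v i) (q j)
  have hb : ∀ i, ‖u i • b i‖ = |u i| * √(eval (v i) (∑ j, q j ^ 2)) := fun i => by
    simp [b, norm_smul, EuclideanSpace.norm_eq]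
  have hsum : ∑ i, u i • b i = 0 := by
    ext j
    simpa [b] using hL (q j) (hq j)
  simpa only [hb, mul_assoc] using
    Finset.two_mul_norm_le_sum_norm_of_sum_eq_zero hsum (Finset.mem_univ k)

end IsSOS

theorem exists_isSOS_eval_eq {n d m : ℕ} {v : Fin m → Fin n → ℝ} {u : Fin m → ℝ}
    (hu : ∀ i, u i ≠ 0)
    (hE : ∀ x : Fin m → ℝ, ∑ i, u i * x i = 0 →
      ∃ f : MvPolynomial (Fin n) ℝ, f.IsHomogeneous d ∧ ∀ i, eval (v i) f = x i)
    {y : Fin m → ℝ} (hy0 : ∀ i, 0 ≤ y i)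
    (hy : ∀ k, 2 * |u k| * √(y k) ≤ ∑ i, |u i| * √(y i)) :
    ∃ p : MvPolynomial (Fin n) ℝ, IsSOS n d p ∧ ∀ i, eval (v i) p = y i := by
  classical
  obtain ⟨w, hw, hw0⟩ := Complex.exists_sum_eq_of_two_mul_le (z := 0) Finset.univ
    (c := fun i => |u i| * √(y i)) (fun i _ => by positivity) (by rw [norm_zero]; positivity)
    (fun k _ => by simpa [mul_assoc] using hy k)
  obtain ⟨f₁, hf₁, hev₁⟩ := hE (fun i => (w i).re / u i) (by
    simpa [mul_div_cancel₀ _ (hu _), ← Complex.re_sum] using congrArg Complex.re hw0)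
  obtain ⟨f₂, hf₂, hev₂⟩ := hE (fun i => (w i).im / u i) (by
    simpa [mul_div_cancel₀ _ (hu _), ← Complex.im_sum] using congrArg Complex.im hw0)
  refine ⟨f₁ ^ 2 + f₂ ^ 2, ⟨2, ![f₁, f₂], fun j => by fin_cases j; exacts [hf₁, hf₂],
    by simp [Fin.sum_univ_two]⟩, fun i => ?_⟩
  have hwi : (w i).re * (w i).re + (w i).im * (w i).im = u i ^ 2 * y i := by
    rw [← Complex.normSq_apply, ← Complex.sq_norm, hw i (Finset.mem_univ i), mul_pow, sq_abs,
      Real.sq_sqrt (hy0 i)]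
  simp only [map_add, map_pow, hev₁, hev₂]
  field_simp [hu i]
  linarith

theorem stmt_14
    (n d m : ℕ)
    (v : Fin m → Fin n → ℝ)
    (u : Fin m → ℝ) (hu : ∀ i, u i ≠ 0)
    (himage : {y : Fin m → ℝ | ∃ f : MvPolynomial (Fin n) ℝ,
        f.IsHomogeneous d ∧ ∀ i, eval (v i) f = y i} =
      {x : Fin m → ℝ | ∑ i, u i * x i = 0}) :
    {y : Fin m → ℝ | ∃ p : MvPolynomial (Fin n) ℝ,
        IsSOS n d p ∧ ∀ i, eval (v i) p = y i} =
      {x : Fin m → ℝ | (∀ i, 0 ≤ x i) ∧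
        ∀ k, 2 * |u k| * Real.sqrt (x k) ≤ ∑ i, |u i| * Real.sqrt (x i)} := by
  have hE (x : Fin m → ℝ) :
      (∃ f : MvPolynomial (Fin n) ℝ, f.IsHomogeneous d ∧ ∀ i, eval (v i) f = x i) ↔
        ∑ i, u i * x i = 0 :=
    Set.ext_iff.mp himage x
  ext y
  constructor
  · rintro ⟨p, hp, hev⟩
    obtain rfl : (fun i => eval (v i) p) = y := funext hev
    exact ⟨fun i => hp.eval_nonneg _,
      hp.two_mul_abs_mul_sqrt_eval_le fun f hf => (hE _).mp ⟨f, hf, fun _ => rfl⟩⟩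
  · rintro ⟨hy0, hy⟩
    exact exists_isSOS_eval_eq hu (fun x => (hE x).mpr) hy0 hy
end

section
/- Let r₁,…,r_k ∈ ℝⁿ and z₁,…,z_m ∈ ℂⁿ with z_i ≠ conj(z_i) for each i, let λ₁,…,λ_k be nonzero reals and μ₁,…,μ_m nonzero complex numbers, and define ℓ : H(n,2d) → ℝ by ℓ(p) = Σᵢ λᵢ p(rᵢ) + Σᵢ (μᵢ p(zᵢ) + conj(μᵢ) p(conj zᵢ)). Let E_ℝ : H(n,d) → ℝ^{k+2m} be given by E_ℝ(p) = (p(r₁),…,p(r_k), Re p(z₁), Im p(z₁),…,Re p(z_m), Im p(z_m)). If the quadratic form Q_ℓ(q) = ℓ(q²) is positive semidefinite on H(n,d), then the dimension of the image of E_ℝ is at most k + m. -/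
/-!
For `q ∈ H(n,d)` one has `ℓ(q²) = B(E_ℝ q)`, where `B` is the quadratic form
`(x, w) ↦ ∑ λᵢ xᵢ² + 2 ∑ Re(μᵢ wᵢ²)` on `ℝᵏ × ℂᵐ ≅ ℝ^{k+2m}`. Choosing `ζᵢ` with `μᵢ ζᵢ² = -1`,
`B` is negative definite on the `m`-dimensional subspace `{(0, (tᵢ ζᵢ)ᵢ) : t ∈ ℝᵐ}`, so its
negative index is at least `m`. A subspace on which `B ≥ 0`, such as the image of `E_ℝ`, meets
every negative definite subspace trivially, hence has dimension at most `(k + 2m) - m`.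
-/

open MvPolynomial QuadraticMap

theorem exists_mul_sq_eq_neg_one {K : Type*} [Field K] [IsAlgClosed K] {a : K} (ha : a ≠ 0) :
    ∃ b : K, a * b ^ 2 = -1 := by
  obtain ⟨b, hb⟩ := IsAlgClosed.exists_pow_nat_eq (-a⁻¹) two_pos
  exact ⟨b, by rw [hb]; field_simp⟩

theorem QuadraticForm.finrank_add_sigNeg_le_of_nonneg {𝕜 M : Type*} [Field 𝕜] [LinearOrder 𝕜]
    [IsStrictOrderedRing 𝕜] [AddCommGroup M] [Module 𝕜 M] [FiniteDimensional 𝕜 M]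
    {Q : QuadraticForm 𝕜 M} {V : Submodule 𝕜 M} (hV : ∀ x ∈ V, 0 ≤ Q x) :
    Module.finrank 𝕜 V + sigNeg Q ≤ Module.finrank 𝕜 M := by
  have := QuadraticForm.sigPos_add_finrank_le_of_nonpos (Q := -Q) (V := V)
    fun x hx => neg_nonpos.mpr (hV x hx)
  rwa [sigPos_neg, add_comm] at this

theorem MvPolynomial.aeval_ofReal {σ : Type*} (x : σ → ℝ) (p : MvPolynomial σ ℝ) :
    aeval (fun j => (x j : ℂ)) p = eval x p := by
  rw [← coe_aeval_eq_eval]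
  exact aeval_algebraMap_apply ℂ x p

theorem MvPolynomial.aeval_conj {σ : Type*} (x : σ → ℂ) (p : MvPolynomial σ ℝ) :
    aeval (fun j => starRingEnd ℂ (x j)) p = starRingEnd ℂ (aeval x p) :=
  (comp_aeval_apply (f := x) Complex.conjAe.toAlgHom p).symm

noncomputable section

variable {k m : ℕ} {σ : Type*}

def complexCoord (i : Fin m) : (Fin k ⊕ (Fin m ⊕ Fin m) → ℝ) →ₗ[ℝ] ℂ :=
  (LinearMap.proj (Sum.inr (Sum.inl i))).smulRight 1 +
    (LinearMap.proj (Sum.inr (Sum.inr i))).smulRight Complex.I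

theorem complexCoord_apply (i : Fin m) (y : Fin k ⊕ (Fin m ⊕ Fin m) → ℝ) :
    complexCoord i y = ⟨y (.inr (.inl i)), y (.inr (.inr i))⟩ := by
  apply Complex.ext <;> simp [complexCoord]

/-- The form `B`. -/
def coordForm (lam : Fin k → ℝ) (μ : Fin m → ℂ) :
    QuadraticForm ℝ (Fin k ⊕ (Fin m ⊕ Fin m) → ℝ) :=
  ∑ i, lam i • proj (Sum.inl i) (Sum.inl i) +
    ∑ i, (2 : ℝ) • (Complex.reLm.compQuadraticMap (μ i • QuadraticMap.sq)).comp (complexCoord i)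

theorem coordForm_apply (lam : Fin k → ℝ) (μ : Fin m → ℂ) (y : Fin k ⊕ (Fin m ⊕ Fin m) → ℝ) :
    coordForm lam μ y = ∑ i, lam i * y (.inl i) ^ 2 + ∑ i, 2 * (μ i * complexCoord i y ^ 2).re := by
  simp [coordForm, _root_.sq]

/-- The map `E_ℝ`. -/
def realEval (r : Fin k → σ → ℝ) (z : Fin m → σ → ℂ) :
    MvPolynomial σ ℝ →ₗ[ℝ] (Fin k ⊕ (Fin m ⊕ Fin m) → ℝ) :=
  LinearMap.pi (Sum.elim (fun i => (aeval (r i)).toLinearMap)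
    (Sum.elim (fun i => Complex.reLm ∘ₗ (aeval (z i)).toLinearMap)
      (fun i => Complex.imLm ∘ₗ (aeval (z i)).toLinearMap)))

theorem realEval_apply (r : Fin k → σ → ℝ) (z : Fin m → σ → ℂ) (p : MvPolynomial σ ℝ) :
    realEval r z p = Sum.elim (fun i => eval (r i) p)
      (Sum.elim (fun i => (aeval (z i) p).re) (fun i => (aeval (z i) p).im)) := by
  ext (i | i | i) <;> simp [realEval]

theorem complexCoord_realEval (r : Fin k → σ → ℝ) (z : Fin m → σ → ℂ) (p : MvPolynomial σ ℝ)
    (i : Fin m) : complexCoord i (realEval r z p) = aeval (z i) p := by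
  simp [complexCoord_apply, realEval_apply]

theorem coordForm_realEval (lam : Fin k → ℝ) (μ : Fin m → ℂ) (r : Fin k → σ → ℝ)
    (z : Fin m → σ → ℂ) (q : MvPolynomial σ ℝ) :
    coordForm lam μ (realEval r z q) =
      ((∑ i, (lam i : ℂ) * aeval (fun j => ((r i j : ℝ) : ℂ)) q ^ 2) +
        ∑ i, (μ i * aeval (z i) q ^ 2 +
          starRingEnd ℂ (μ i) * aeval (fun j => starRingEnd ℂ (z i j)) q ^ 2)).re := by
  simp only [coordForm_apply, complexCoord_realEval, Complex.add_re, Complex.re_sum]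
  congr 1
  · refine Finset.sum_congr rfl fun i _ => ?_
    rw [aeval_ofReal, ← Complex.ofReal_pow, Complex.re_ofReal_mul, Complex.ofReal_re,
      realEval_apply, Sum.elim_inl]
  · refine Finset.sum_congr rfl fun i _ => ?_
    rw [aeval_conj, ← map_pow (starRingEnd ℂ), ← map_mul, Complex.conj_re, two_mul]

def complexDiag (ζ : Fin m → ℂ) : (Fin m → ℝ) →ₗ[ℝ] (Fin k ⊕ (Fin m ⊕ Fin m) → ℝ) :=
  LinearMap.pi (Sum.elim 0
    (Sum.elim (fun i => (ζ i).re • LinearMap.proj i) (fun i => (ζ i).im • LinearMap.proj i)))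

theorem complexCoord_complexDiag (ζ : Fin m → ℂ) (t : Fin m → ℝ) (i : Fin m) :
    complexCoord i (complexDiag (k := k) ζ t) = t i * ζ i := by
  apply Complex.ext <;> simp [complexCoord_apply, complexDiag, mul_comm]

theorem coordForm_complexDiag (lam : Fin k → ℝ) {μ ζ : Fin m → ℂ} (hζ : ∀ i, μ i * ζ i ^ 2 = -1)
    (t : Fin m → ℝ) : coordForm lam μ (complexDiag ζ t) = -2 * ∑ i, t i ^ 2 := by
  have hμζ (i : Fin m) : (μ i * (t i * ζ i) ^ 2).re = -t i ^ 2 := by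
    rw [show μ i * (t i * ζ i) ^ 2 = ((-t i ^ 2 : ℝ) : ℂ) by
      push_cast; linear_combination (t i : ℂ) ^ 2 * hζ i, Complex.ofReal_re]
  simp only [coordForm_apply, complexCoord_complexDiag, hμζ]
  simp [complexDiag, Finset.mul_sum]

theorem complexDiag_injective {ζ : Fin m → ℂ} (hζ : ∀ i, ζ i ≠ 0) :
    Function.Injective (complexDiag (k := k) ζ) := by
  refine (injective_iff_map_eq_zero _).mpr fun t ht => funext fun i => ?_
  have := complexCoord_complexDiag (k := k) ζ t i
  rw [ht, map_zero, eq_comm, mul_eq_zero] at this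
  exact_mod_cast this.resolve_right (hζ i)

theorem le_sigNeg_coordForm (lam : Fin k → ℝ) {μ : Fin m → ℂ} (hμ : ∀ i, μ i ≠ 0) :
    m ≤ sigNeg (coordForm lam μ) := by
  choose ζ hζ using fun i => exists_mul_sq_eq_neg_one (hμ i)
  have hζ0 (i : Fin m) : ζ i ≠ 0 := by
    rintro h
    simpa [h] using hζ i
  have hnegDef : ((-coordForm lam μ).restrict (complexDiag ζ).range).PosDef := by
    rintro ⟨_, t, rfl⟩ ht
    have ht : t ≠ 0 := fun h => ht (by simp [h])
    simp only [restrict_apply, neg_apply, coordForm_complexDiag lam hζ]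
    have : 0 < ∑ i, t i ^ 2 := by
      obtain ⟨i, hi⟩ := Function.ne_iff.mp ht
      exact Finset.sum_pos' (fun j _ => sq_nonneg _) ⟨i, Finset.mem_univ _, sq_pos_of_ne_zero hi⟩
    linarith
  simpa [LinearMap.finrank_range_of_inj (complexDiag_injective hζ0)] using
    le_sigNeg_of_negDef _ hnegDef

end

theorem stmt_16_general
    (n d k m : ℕ)
    (r : Fin k → Fin n → ℝ)
    (z : Fin m → Fin n → ℂ)
    (lam : Fin k → ℝ)
    (μ : Fin m → ℂ) (hμ : ∀ i, μ i ≠ 0)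
    (hpsd : ∀ q : MvPolynomial (Fin n) ℝ, q.IsHomogeneous d →
      0 ≤ ((∑ i, (lam i : ℂ) * aeval (fun j => ((r i j : ℝ) : ℂ)) q ^ 2) +
        ∑ i, (μ i * aeval (z i) q ^ 2 +
          starRingEnd ℂ (μ i) * aeval (fun j => starRingEnd ℂ (z i j)) q ^ 2)).re) :
    Module.finrank ℝ (Submodule.span ℝ
      {y : Fin k ⊕ (Fin m ⊕ Fin m) → ℝ | ∃ p : MvPolynomial (Fin n) ℝ,
        p.IsHomogeneous d ∧
        y = Sum.elim (fun i => eval (r i) p)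
            (Sum.elim (fun i => (aeval (z i) p).re) (fun i => (aeval (z i) p).im))})
      ≤ k + m := by
  have himage : {y : Fin k ⊕ (Fin m ⊕ Fin m) → ℝ | ∃ p : MvPolynomial (Fin n) ℝ,
        p.IsHomogeneous d ∧
        y = Sum.elim (fun i => eval (r i) p)
            (Sum.elim (fun i => (aeval (z i) p).re) (fun i => (aeval (z i) p).im))} =
      (homogeneousSubmodule (Fin n) ℝ d).map (realEval r z) := by
    ext y
    simp [realEval_apply, eq_comm]
  have hnonneg : ∀ y ∈ (homogeneousSubmodule (Fin n) ℝ d).map (realEval r z),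
      0 ≤ coordForm lam μ y := by
    rintro _ ⟨q, hq, rfl⟩
    rw [coordForm_realEval]
    exact hpsd q hq
  have hdim := QuadraticForm.finrank_add_sigNeg_le_of_nonneg hnonneg
  have hneg := le_sigNeg_coordForm lam hμ
  rw [himage, Submodule.span_eq]
  simp only [Module.finrank_fintype_fun_eq_card, Fintype.card_sum, Fintype.card_fin] at hdim
  omega

theorem stmt_16
    (n d k m : ℕ)
    (r : Fin k → Fin n → ℝ)
    (z : Fin m → Fin n → ℂ)
    (hz : ∀ i, (fun j => starRingEnd ℂ (z i j)) ≠ z i)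
    (lam : Fin k → ℝ) (hlam : ∀ i, lam i ≠ 0)
    (μ : Fin m → ℂ) (hμ : ∀ i, μ i ≠ 0)
    (hpsd : ∀ q : MvPolynomial (Fin n) ℝ, q.IsHomogeneous d →
      0 ≤ ((∑ i, (lam i : ℂ) * aeval (fun j => ((r i j : ℝ) : ℂ)) q ^ 2) +
        ∑ i, (μ i * aeval (z i) q ^ 2 +
          starRingEnd ℂ (μ i) * aeval (fun j => starRingEnd ℂ (z i j)) q ^ 2)).re) :
    Module.finrank ℝ (Submodule.span ℝ
      {y : Fin k ⊕ (Fin m ⊕ Fin m) → ℝ | ∃ p : MvPolynomial (Fin n) ℝ,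
        p.IsHomogeneous d ∧
        y = Sum.elim (fun i => eval (r i) p)
            (Sum.elim (fun i => (aeval (z i) p).re) (fun i => (aeval (z i) p).im))})
      ≤ k + m :=
  stmt_16_general n d k m r z lam μ hμ hpsd
end
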